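/- arXiv:1410.5935 — 10 statements merged into one kernel-verified Lean document; each statement's English description precedes it below -/
import Mathlib

section
/- Let n ≥ 1, let f be a complex polynomial of degree at most n, and let g be a monic complex polynomial of degree n with zeros μ₁, …, μₙ (listed with multiplicity, so g = ∏_{j=1}^n (z − μⱼ)). Then [f,g]_n = Sym_n(f)(μ₁,…,μₙ). -/
open Polynomial

/-- The apolarity form `[f,g]_m`. -/
noncomputable def apol (m : ℕ) (f g : Polynomial ℂ) : ℂ :=
  ∑ k ∈ Finset.range (m + 1),
    (-1 : ℂ) ^ k * ((m.choose k : ℂ))⁻¹ * f.coeff k * g.coeff (m - k)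

/-- The symmetrization `Sym_N(f)` of a polynomial, as a function on `ι → ℂ`
with `N = card ι`. -/
noncomputable def symFun {ι : Type*} [Fintype ι] (f : Polynomial ℂ) (y : ι → ℂ) : ℂ :=
  ∑ k ∈ Finset.range (Fintype.card ι + 1),
    (((Fintype.card ι).choose k : ℂ))⁻¹ * f.coeff k *
      MvPolynomial.eval y (MvPolynomial.esymm ι ℂ k)

/-- A circular domain: an open or closed disk or half-plane, or a complement thereof. -/
def IsCircularDomain (D : Set ℂ) : Prop :=
  ∃ (α γ : ℝ) (β : ℂ),
    D = {z : ℂ | α * Complex.normSq z + ((starRingEnd ℂ) β * z).re + γ < 0} ∨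
    D = {z : ℂ | α * Complex.normSq z + ((starRingEnd ℂ) β * z).re + γ ≤ 0}

/-- `q_∘(D) = {u : q⁻¹(u) ⊆ D}`. -/
def innerImage (q : Polynomial ℂ) (D : Set ℂ) : Set ℂ :=
  {u : ℂ | ∀ z : ℂ, q.eval z = u → z ∈ D}

/-- `S_{q,n}(f)(u₁,…,uₙ) = [f∘q, ∏ⱼ (q - uⱼ)]_{nd}`. -/
noncomputable def Sfun (q : Polynomial ℂ) (n : ℕ) (f : Polynomial ℂ) (u : Fin n → ℂ) : ℂ :=
  apol (n * q.natDegree) (f.comp q) (∏ j, (q - Polynomial.C (u j)))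

/-- The Fischer inner product `⟨f,g⟩_n`. -/
noncomputable def fischer (n : ℕ) (f g : Polynomial ℂ) : ℂ :=
  ∑ k ∈ Finset.range (n + 1),
    ((n.choose k : ℂ))⁻¹ * f.coeff k * (starRingEnd ℂ) (g.coeff k)

/-- For f of degree at most n and g monic of degree n with zeros
μ₁,…,μₙ (with multiplicity), [f,g]_n = Sym_n(f)(μ₁,…,μₙ). -/
theorem stmt_0 (n : ℕ) (hn : 1 ≤ n) (f : Polynomial ℂ) (hf : f.degree ≤ (n : ℕ))
    (μ : Fin n → ℂ) (g : Polynomial ℂ)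
    (hg : g = ∏ j, (Polynomial.X - Polynomial.C (μ j))) :
    apol n f g = symFun f μ := by
  subst hg
  unfold apol symFun
  simp only [Fintype.card_fin]
  refine Finset.sum_congr rfl fun k hk => ?_
  have hk' : k ≤ n := Nat.lt_succ_iff.mp (Finset.mem_range.mp hk)
  have hcard : Multiset.card (Multiset.map μ Finset.univ.val) = n := by simp
  have hcoeff : (∏ j, (X - C (μ j))).coeff (n - k)
      = (-1 : ℂ) ^ k * (Multiset.map μ Finset.univ.val).esymm k := by
    have h1 : (∏ j, (X - C (μ j)))
        = ((Multiset.map μ Finset.univ.val).map (fun t => X - C t)).prod := by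
      rw [Multiset.map_map]; rfl
    rw [h1, Multiset.prod_X_sub_C_coeff _ (by rw [hcard]; exact Nat.sub_le n k)]
    rw [hcard, Nat.sub_sub_self hk']
  have heval : MvPolynomial.eval μ (MvPolynomial.esymm (Fin n) ℂ k)
      = (Multiset.map μ Finset.univ.val).esymm k := by
    have := MvPolynomial.aeval_esymm_eq_multiset_esymm (σ := Fin n) (R := ℂ) (S := ℂ) k μ
    rw [← this, ← MvPolynomial.coe_aeval_eq_eval]; rfl
  rw [hcoeff, heval]
  ring_nf
  rw [show ((-1:ℂ))^(k*2) = 1 by rw [mul_comm, pow_mul]; simp, mul_one]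
end

section
/- (Walsh's Coincidence Theorem) Let D ⊆ ℂ be a circular domain and let f be a monic complex polynomial of degree n ≥ 1 that has no zeros in D. Then Sym_n(f) has no zeros in Dⁿ, i.e. for all (y₁,…,yₙ) ∈ Dⁿ one has Sym_n(f)(y₁,…,yₙ) ≠ 0. -/
open Polynomial

/-!
Put `B_n(g, f) = ∑ₖ (-1)ᵏ g⁽ᵏ⁾ f⁽ⁿ⁻ᵏ⁾`. For `deg g, deg f ≤ n` its derivative telescopes to zero,
so `B_n(g, f)` is the constant `± n! [f, g]_n`; with `g = ∏ⱼ (X - yⱼ)` this is `± n! Sym_n(f)(y)`.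
It therefore suffices to show `B_n(g, f) ≠ 0` when the roots of `g` lie in `D` and those of `f`
do not (Grace's theorem). Split off a root `ρ ∉ D` of `f = (X - ρ) f₁` and evaluate at `ρ`:
`B_n(g, f)(ρ) = B_{n-1}(D_ρ g, f₁)(ρ)` with the polar derivative `D_ρ g = n g + (ρ - X) g'`, so
induction applies once the roots of `D_ρ g` lie in `D`. This is Laguerre's theorem: if
`D_ρ g (r) = 0` with `r ∉ D`, then `(r - ρ)⁻¹` is the mean of the `(r - z)⁻¹` over the roots `z`
of `g`; the inversion `z ↦ (r - z)⁻¹` maps a closed domain `D` into a convex circular domain, so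
`ρ ∈ D`. An open domain `{q < 0}` reduces to the closed one `{q ≤ c}`, where `c < 0` is the
largest value of `q` at the points `yⱼ`.
-/

open Complex
open scoped ComplexConjugate

theorem Convex.inv_card_smul_sum_mem {E : Type*} [AddCommGroup E] [Module ℝ E] {K : Set E}
    (hK : Convex ℝ K) {M : Multiset E} (hM : ∀ x ∈ M, x ∈ K) (hM0 : M ≠ 0) :
    (Multiset.card M : ℝ)⁻¹ • M.sum ∈ K := by
  induction M using Multiset.induction_on with
  | empty => exact absurd rfl hM0
  | cons a M ih =>
    rcases eq_or_ne M 0 with rfl | hMne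
    · simpa using hM a (Multiset.mem_cons_self a 0)
    have hk : (0 : ℝ) < Multiset.card M := by exact_mod_cast Multiset.card_pos.mpr hMne
    convert hK (hM a (Multiset.mem_cons_self a M))
      (ih (fun x hx ↦ hM x (Multiset.mem_cons_of_mem hx)) hMne)
      (a := (Multiset.card M + 1 : ℝ)⁻¹) (b := Multiset.card M / (Multiset.card M + 1))
      (by positivity) (by positivity) (by field_simp; ring) using 1
    rw [Multiset.card_cons, Multiset.sum_cons, smul_add, smul_smul, Nat.cast_succ]
    congr 2
    field_simp

theorem Convex.inv_smul_sum_mem_of_card_le {E : Type*} [AddCommGroup E] [Module ℝ E]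
    {K : Set E} (hK : Convex ℝ K) {M : Multiset E} (hM : ∀ x ∈ M, x ∈ K) {m : ℕ} (hm : 0 < m)
    (hcard : Multiset.card M ≤ m) (hfull : Multiset.card M = m ∨ (0 : E) ∈ K) :
    (m : ℝ)⁻¹ • M.sum ∈ K := by
  rcases hfull with rfl | h0
  · exact hK.inv_card_smul_sum_mem hM (Multiset.card_pos.mp hm)
  rcases eq_or_ne M 0 with rfl | hM0
  · simpa using h0
  have hk : (0 : ℝ) < Multiset.card M := by exact_mod_cast Multiset.card_pos.mpr hM0
  have hm' : (Multiset.card M : ℝ) ≤ m := by exact_mod_cast hcard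
  convert hK.smul_mem_of_zero_mem h0 (hK.inv_card_smul_sum_mem hM hM0)
    ⟨by positivity, div_le_one_of_le₀ hm' (by positivity)⟩ using 1
  rw [smul_smul]
  congr 1
  field_simp [hk.ne']

theorem Polynomial.eval_derivative_multiset_prod_X_sub_C {K : Type*} [Field K] {S : Multiset K}
    {r : K} (hr : r ∉ S) :
    (derivative (S.map (X - C ·)).prod).eval r =
      (S.map (X - C ·)).prod.eval r * (S.map fun a ↦ (r - a)⁻¹).sum := by
  induction S using Multiset.induction_on with
  | empty => simp
  | cons a S ih =>
    have ha : r - a ≠ 0 := sub_ne_zero.mpr fun h ↦ hr (h ▸ Multiset.mem_cons_self a S)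
    simp only [Multiset.map_cons, Multiset.prod_cons, Multiset.sum_cons, derivative_mul,
      derivative_sub, derivative_X, derivative_C, sub_zero, one_mul, eval_add, eval_mul,
      eval_sub, eval_X, eval_C, ih fun h ↦ hr (Multiset.mem_cons_of_mem h)]
    field_simp

theorem Polynomial.Splits.eval_derivative_eq_mul_sum_inv_sub {K : Type*} [Field K] {g : K[X]}
    (hg : g.Splits) {r : K} (hr : ¬ g.IsRoot r) :
    (derivative g).eval r = g.eval r * (g.roots.map fun z ↦ (r - z)⁻¹).sum := by
  have hgP := hg.eq_prod_roots
  set P := (g.roots.map (X - C ·)).prod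
  have hrP : r ∉ g.roots := fun h ↦ hr (isRoot_of_mem_roots h)
  have h1 : (derivative g).eval r = g.leadingCoeff * (derivative P).eval r := by
    conv_lhs => rw [hgP]
    rw [derivative_C_mul, eval_mul, eval_C]
  have h2 : g.eval r = g.leadingCoeff * P.eval r := by
    conv_lhs => rw [hgP]
    rw [eval_mul, eval_C]
  rw [h1, h2, eval_derivative_multiset_prod_X_sub_C hrP, mul_assoc]

namespace Walsh

section ApolarPoly

variable {R : Type*} [CommRing R]

noncomputable def apolarPoly (n : ℕ) (f g : R[X]) : R[X] :=
  ∑ k ∈ Finset.range (n + 1), C ((-1) ^ k) * (derivative^[k] f * derivative^[n - k] g)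

theorem derivative_apolarPoly {n : ℕ} {f g : R[X]} (hf : f.natDegree ≤ n)
    (hg : g.natDegree ≤ n) : derivative (apolarPoly n f g) = 0 := by
  set T : ℕ → R[X] := fun k ↦ C ((-1) ^ k) * (derivative^[k] f * derivative^[n + 1 - k] g)
  have hterm : ∀ k ∈ Finset.range (n + 1),
      derivative (C ((-1) ^ k) * (derivative^[k] f * derivative^[n - k] g)) = T k - T (k + 1) := by
    intro k hk
    have hk : n + 1 - k = n - k + 1 := by have := Finset.mem_range.mp hk; omega
    rw [derivative_C_mul, derivative_mul, ← Function.iterate_succ_apply' derivative k f,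
      ← Function.iterate_succ_apply' derivative (n - k) g]
    simp only [T, hk, Nat.add_sub_add_right, pow_succ, map_mul, map_neg, map_one]
    ring
  have hT0 : T 0 = 0 := by simp [T, iterate_derivative_eq_zero (Nat.lt_succ_of_le hg)]
  have hTn : T (n + 1) = 0 := by simp [T, iterate_derivative_eq_zero (Nat.lt_succ_of_le hf)]
  rw [apolarPoly, derivative_sum, Finset.sum_congr rfl hterm, Finset.sum_range_sub', hT0, hTn,
    sub_zero]

theorem apolarPoly_swap (n : ℕ) (f g : R[X]) :
    apolarPoly n g f = C ((-1) ^ n) * apolarPoly n f g := by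
  rw [apolarPoly, apolarPoly, Finset.mul_sum, ← Finset.sum_range_reflect]
  refine Finset.sum_congr rfl fun k hk ↦ ?_
  have hk : k ≤ n := Nat.lt_succ_iff.mp (Finset.mem_range.mp hk)
  have hsign : ((-1 : R) ^ (n - k)) = (-1) ^ n * (-1) ^ k := by
    rw [← Nat.sub_add_cancel hk, pow_add, mul_assoc, ← pow_add, ← two_mul, pow_mul]
    simp
  rw [Nat.add_sub_cancel, Nat.sub_sub_self hk, hsign]
  simp only [map_mul]
  ring

theorem eval_apolarPoly_eq [IsAddTorsionFree R] {n : ℕ} {f g : R[X]} (hf : f.natDegree ≤ n)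
    (hg : g.natDegree ≤ n) (a b : R) :
    (apolarPoly n f g).eval a = (apolarPoly n f g).eval b := by
  rw [eq_C_of_derivative_eq_zero (derivative_apolarPoly hf hg), eval_C, eval_C]

noncomputable def polarDeriv (n : ℕ) (ρ : R) (g : R[X]) : R[X] :=
  C (n : R) * g + (C ρ - X) * derivative g

theorem eval_polarDeriv (n : ℕ) (ρ : R) (g : R[X]) (z : R) :
    (polarDeriv n ρ g).eval z = n * g.eval z + (ρ - z) * (derivative g).eval z := by
  simp [polarDeriv]

theorem coeff_polarDeriv (n : ℕ) (ρ : R) (g : R[X]) (k : ℕ) :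
    (polarDeriv n ρ g).coeff k = (n - k) * g.coeff k + ρ * (k + 1) * g.coeff (k + 1) := by
  rcases k with _ | k
  · simp [polarDeriv, coeff_derivative]
  · simp [polarDeriv, sub_mul, coeff_derivative, coeff_X_mul]
    ring

theorem eval_iterate_derivative_X_sub_C_mul (n : ℕ) (ρ : R) (h : R[X]) :
    (derivative^[n] ((X - C ρ) * h)).eval ρ = n * (derivative^[n - 1] h).eval ρ := by
  simp [sub_mul, mul_comm X, iterate_derivative_mul_X, iterate_derivative_C_mul]
  ring

theorem eval_iterate_derivative_polarDeriv (n k : ℕ) (ρ : R) (g : R[X]) :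
    (derivative^[k] (polarDeriv n ρ g)).eval ρ = (n - k) * (derivative^[k] g).eval ρ := by
  simp [polarDeriv, sub_mul, mul_comm X, iterate_derivative_derivative_mul_X,
    iterate_derivative_C_mul]
  ring

theorem eval_apolarPoly_X_sub_C_mul (n : ℕ) (f h : R[X]) (ρ : R) :
    (apolarPoly (n + 1) f ((X - C ρ) * h)).eval ρ =
      (apolarPoly n (polarDeriv (n + 1) ρ f) h).eval ρ := by
  rw [apolarPoly, apolarPoly, eval_finsetSum, eval_finsetSum, Finset.sum_range_succ]
  simp only [eval_mul, eval_C, eval_iterate_derivative_X_sub_C_mul,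
    eval_iterate_derivative_polarDeriv, Nat.sub_self, Nat.cast_zero, zero_mul, mul_zero, add_zero]
  refine Finset.sum_congr rfl fun k hk ↦ ?_
  have hk : k ≤ n := Nat.lt_succ_iff.mp (Finset.mem_range.mp hk)
  rw [show n + 1 - k - 1 = n - k by omega, Nat.cast_sub (by omega)]
  push_cast
  ring

theorem natDegree_polarDeriv_le {n : ℕ} {ρ : R} {g : R[X]} (hg : g.natDegree ≤ n + 1) :
    (polarDeriv (n + 1) ρ g).natDegree ≤ n := by
  refine natDegree_le_iff_coeff_eq_zero.mpr fun k hk ↦ ?_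
  rw [coeff_polarDeriv, coeff_eq_zero_of_natDegree_lt (by omega : g.natDegree < k + 1)]
  rcases (Nat.succ_le_of_lt hk).eq_or_lt with rfl | hk
  · simp
  · simp [coeff_eq_zero_of_natDegree_lt (by omega : g.natDegree < k)]

theorem polarDeriv_ne_zero [IsDomain R] [CharZero R] {n : ℕ} {ρ : R} {g : R[X]} (hn : n ≠ 0)
    (hρ : ¬ g.IsRoot ρ) : polarDeriv n ρ g ≠ 0 := by
  intro h
  have := congrArg (eval ρ) h
  simp only [eval_polarDeriv, sub_self, zero_mul, add_zero, eval_zero, mul_eq_zero,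
    Nat.cast_eq_zero] at this
  tauto

theorem natDegree_polarDeriv_eq {K : Type*} [Field K] {n : ℕ} {ρ : K} {g : K[X]} (hg : g.Splits)
    (hdeg : g.natDegree = n + 1) (hρ : (n + 1 : K) * ρ ≠ g.roots.sum) :
    (polarDeriv (n + 1) ρ g).natDegree = n := by
  refine le_antisymm (natDegree_polarDeriv_le hdeg.le) (le_natDegree_of_ne_zero ?_)
  have hlc : g.leadingCoeff ≠ 0 :=
    leadingCoeff_ne_zero.mpr (ne_zero_of_natDegree_gt (by omega : 0 < g.natDegree))
  have hnext : g.coeff n = -g.leadingCoeff * g.roots.sum := by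
    rw [← hg.nextCoeff_eq_neg_sum_roots_mul_leadingCoeff, nextCoeff_of_natDegree_pos (by omega),
      hdeg, Nat.add_sub_cancel]
  have hlead : g.coeff (n + 1) = g.leadingCoeff := by rw [← hdeg]; rfl
  rw [coeff_polarDeriv, hnext, hlead]
  push_cast
  intro h
  have : g.leadingCoeff * ((n + 1) * ρ - g.roots.sum) = 0 := by linear_combination h
  exact hρ (sub_eq_zero.mp ((mul_eq_zero.mp this).resolve_left hlc))

end ApolarPoly

theorem eval_zero_apolarPoly (n : ℕ) (f g : ℂ[X]) :
    (apolarPoly n f g).eval 0 = n.factorial * apol n f g := by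
  rw [apolarPoly, apol, eval_finsetSum, Finset.mul_sum]
  refine Finset.sum_congr rfl fun k hk ↦ ?_
  have hk : k ≤ n := Nat.lt_succ_iff.mp (Finset.mem_range.mp hk)
  simp only [eval_mul, eval_C, ← coeff_zero_eq_eval_zero, coeff_iterate_derivative, zero_add,
    Nat.descFactorial_self, nsmul_eq_mul]
  have hfac : (n.choose k : ℂ) * (k.factorial * (n - k).factorial) = n.factorial := by
    rw [← mul_assoc]; exact_mod_cast Nat.choose_mul_factorial_mul_factorial hk
  have hc : (n.choose k : ℂ) ≠ 0 := Nat.cast_ne_zero.mpr (Nat.choose_pos hk).ne'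
  field_simp
  linear_combination f.coeff k * g.coeff (n - k) * hfac

theorem symFun_eq_apol {ι : Type*} [Fintype ι] (f : ℂ[X]) (y : ι → ℂ) :
    symFun f y =
      apol (Fintype.card ι) f ((Finset.univ.val.map y).map (X - C ·)).prod := by
  have hcard : Multiset.card (Finset.univ.val.map y) = Fintype.card ι := by simp
  rw [symFun, apol]
  refine Finset.sum_congr rfl fun k hk ↦ ?_
  have hk : k ≤ Fintype.card ι := Nat.lt_succ_iff.mp (Finset.mem_range.mp hk)
  have hesymm : MvPolynomial.eval y (MvPolynomial.esymm ι ℂ k) =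
      (Finset.univ.val.map y).esymm k :=
    MvPolynomial.aeval_esymm_eq_multiset_esymm ι ℂ k y
  rw [Multiset.prod_X_sub_C_coeff _ (by omega), hcard, Nat.sub_sub_self hk, hesymm]
  have hsq : ((-1 : ℂ) ^ k) ^ 2 = 1 := by rw [← pow_mul, pow_mul', neg_one_sq, one_pow]
  linear_combination (-((Fintype.card ι).choose k : ℂ)⁻¹ * f.coeff k *
    (Finset.univ.val.map y).esymm k) * hsq

def circleQuad (α γ : ℝ) (β z : ℂ) : ℝ :=
  α * normSq z + (conj β * z).re + γ

section CircleQuad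

variable {α γ : ℝ} {β : ℂ}

theorem convexOn_circleQuad (hα : 0 ≤ α) : ConvexOn ℝ Set.univ (circleQuad α γ β) := by
  refine ⟨convex_univ, fun x _ y _ a b ha hb hab ↦ ?_⟩
  have key : a • circleQuad α γ β x + b • circleQuad α γ β y - circleQuad α γ β (a • x + b • y)
      = α * a * b * normSq (x - y) := by
    obtain rfl : b = 1 - a := by linarith
    simp [circleQuad, normSq_apply]
    ring
  have : 0 ≤ α * a * b * normSq (x - y) := by have := normSq_nonneg (x - y); positivity
  linarith

theorem convex_circleQuad_nonpos (hα : 0 ≤ α) : Convex ℝ {z | circleQuad α γ β z ≤ 0} := by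
  simpa using (convexOn_circleQuad (γ := γ) (β := β) hα).convex_le 0

theorem circleQuad_inv_sub {w z : ℂ} (hzw : z ≠ w) :
    circleQuad (circleQuad α γ β w) α (-conj (2 * α * w + β)) (w - z)⁻¹ =
      normSq (w - z)⁻¹ * circleQuad α γ β z := by
  obtain ⟨d, rfl⟩ : ∃ d, z = w - d := ⟨w - z, by ring⟩
  have hd : normSq d ≠ 0 := (normSq_pos.mpr fun h ↦ hzw (by simp [h])).ne'
  rw [sub_sub_cancel]
  simp only [circleQuad, normSq_inv, mul_re, inv_re, inv_im, conj_re, conj_im, neg_re, neg_im,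
    add_re, add_im, mul_im, sub_re, sub_im, ofReal_re, ofReal_im, re_ofNat, im_ofNat]
  field_simp
  simp only [normSq_apply, sub_re, sub_im]
  ring

-- `(w - ζ)⁻¹` is the mean of the points `(w - z)⁻¹`, padded with zeros, and these all lie in
-- the image of the domain under `z ↦ (w - z)⁻¹`, a circular domain that is convex because
-- `0 < circleQuad α γ β w`.
theorem circleQuad_nonpos_of_sum_inv_sub_eq {w ζ : ℂ} {m : ℕ} {M : Multiset ℂ} (hm : 0 < m)
    (hcard : Multiset.card M ≤ m) (hfull : Multiset.card M = m ∨ α ≤ 0)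
    (hM : ∀ z ∈ M, circleQuad α γ β z ≤ 0) (hw : 0 < circleQuad α γ β w) (hζw : ζ ≠ w)
    (hsum : (M.map fun z ↦ (w - z)⁻¹).sum = m * (w - ζ)⁻¹) :
    circleQuad α γ β ζ ≤ 0 := by
  set K := {u | circleQuad (circleQuad α γ β w) α (-conj (2 * α * w + β)) u ≤ 0}
  have hK : Convex ℝ K := convex_circleQuad_nonpos hw.le
  have hMK : ∀ u ∈ M.map fun z ↦ (w - z)⁻¹, u ∈ K := by
    simp only [Multiset.mem_map, forall_exists_index, and_imp, forall_apply_eq_imp_iff₂]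
    intro z hz
    have hzw : z ≠ w := ne_of_apply_ne (circleQuad α γ β) ((hM z hz).trans_lt hw).ne
    rw [Set.mem_ofPred_eq, circleQuad_inv_sub hzw]
    exact mul_nonpos_of_nonneg_of_nonpos (normSq_nonneg _) (hM z hz)
  have hfull' : Multiset.card (M.map fun z ↦ (w - z)⁻¹) = m ∨ (0 : ℂ) ∈ K := by
    simpa [K, circleQuad] using hfull
  have havg : (w - ζ)⁻¹ ∈ K := by
    convert hK.inv_smul_sum_mem_of_card_le hMK hm (by simpa using hcard) hfull' using 1
    have hm0 : (m : ℂ) ≠ 0 := by exact_mod_cast hm.ne'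
    rw [hsum, real_smul]
    push_cast
    field_simp
  have hpos : 0 < normSq (w - ζ)⁻¹ := normSq_pos.mpr (inv_ne_zero (sub_ne_zero.mpr hζw.symm))
  rw [Set.mem_ofPred_eq, circleQuad_inv_sub hζw] at havg
  exact nonpos_of_mul_nonpos_right havg hpos

theorem circleQuad_nonpos_of_isRoot_polarDeriv {n : ℕ} (hn : 0 < n) {g : ℂ[X]}
    (hdeg : g.natDegree ≤ n) (hfull : g.natDegree = n ∨ α ≤ 0)
    (hroots : ∀ z, g.IsRoot z → circleQuad α γ β z ≤ 0) {ρ r : ℂ}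
    (hρ : 0 < circleQuad α γ β ρ) (hr : (polarDeriv n ρ g).IsRoot r) :
    circleQuad α γ β r ≤ 0 := by
  by_contra! hrD
  have hgr : ¬ g.IsRoot r := fun h ↦ by linarith [hroots r h]
  have hrρ : r ≠ ρ := by
    rintro rfl
    simp only [IsRoot, eval_polarDeriv, sub_self, zero_mul, add_zero, mul_eq_zero,
      Nat.cast_eq_zero, hn.ne', false_or] at hr
    exact hgr hr
  have hcard : Multiset.card g.roots = g.natDegree := IsAlgClosed.card_roots_eq_natDegree
  refine not_le.mpr hρ (circleQuad_nonpos_of_sum_inv_sub_eq hn (hcard ▸ hdeg) (hcard ▸ hfull)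
    (fun z hz ↦ hroots z (isRoot_of_mem_roots hz)) hrD hrρ.symm ?_)
  have hlog := (IsAlgClosed.splits g).eval_derivative_eq_mul_sum_inv_sub hgr
  rw [IsRoot, eval_polarDeriv, hlog] at hr
  set S := (g.roots.map fun z ↦ (r - z)⁻¹).sum
  have hS : (n : ℂ) + (ρ - r) * S = 0 :=
    (mul_eq_zero.mp (by linear_combination hr : g.eval r * (n + (ρ - r) * S) = 0)).resolve_left hgr
  rw [eq_mul_inv_iff_mul_eq₀ (sub_ne_zero.mpr hrρ)]
  linear_combination -hS

theorem circleQuad_nonpos_sum_div_card (hα : 0 ≤ α) {M : Multiset ℂ} (hM0 : M ≠ 0)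
    (hM : ∀ z ∈ M, circleQuad α γ β z ≤ 0) :
    circleQuad α γ β (M.sum / Multiset.card M) ≤ 0 := by
  have := (convex_circleQuad_nonpos hα).inv_card_smul_sum_mem hM hM0
  rwa [real_smul, ofReal_inv, ofReal_natCast, inv_mul_eq_div] at this

-- A root of `g` that the polar derivative loses has gone to `∞`, which is harmless exactly when
-- `∞` lies in the closure of the domain, i.e. when `α ≤ 0`.
theorem natDegree_polarDeriv_eq_or_nonpos {m : ℕ} {g : ℂ[X]} (hgfull : g.natDegree = m + 1 ∨ α ≤ 0)
    (hgroots : ∀ z, g.IsRoot z → circleQuad α γ β z ≤ 0) {ρ : ℂ} (hρ : 0 < circleQuad α γ β ρ) :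
    (polarDeriv (m + 1) ρ g).natDegree = m ∨ α ≤ 0 := by
  refine (le_or_gt α 0).symm.imp (fun hα ↦ ?_) id
  have hgdeg := hgfull.resolve_right hα.not_ge
  refine natDegree_polarDeriv_eq (IsAlgClosed.splits g) hgdeg fun h ↦ ?_
  have hcard : Multiset.card g.roots = m + 1 := IsAlgClosed.card_roots_eq_natDegree.trans hgdeg
  have hcentroid : g.roots.sum / Multiset.card g.roots = ρ := by
    rw [hcard, ← h]
    push_cast
    field_simp
  have := circleQuad_nonpos_sum_div_card hα.le (Multiset.card_pos.mp (hcard ▸ m.succ_pos))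
    fun z hz ↦ hgroots z (isRoot_of_mem_roots hz)
  rw [hcentroid] at this
  linarith

theorem eval_zero_apolarPoly_ne_zero {m : ℕ} {g f : ℂ[X]} (hg0 : g ≠ 0)
    (hgdeg : g.natDegree ≤ m) (hgfull : g.natDegree = m ∨ α ≤ 0)
    (hgroots : ∀ z, g.IsRoot z → circleQuad α γ β z ≤ 0) (hf0 : f ≠ 0) (hfdeg : f.natDegree = m)
    (hfroots : ∀ z, f.IsRoot z → 0 < circleQuad α γ β z) :
    (apolarPoly m g f).eval 0 ≠ 0 := by
  induction m generalizing g f with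
  | zero =>
    have hg := eq_C_of_natDegree_le_zero hgdeg
    have hf := eq_C_of_natDegree_eq_zero hfdeg
    simp only [apolarPoly, zero_add, Finset.range_one, Finset.sum_singleton, pow_zero, C_1,
      one_mul, Nat.sub_self, Function.iterate_zero, id_eq, eval_mul]
    rw [hg, hf, eval_C, eval_C]
    exact mul_ne_zero (fun h ↦ hg0 (by rw [hg, h, C_0])) (fun h ↦ hf0 (by rw [hf, h, C_0]))
  | succ m ih =>
    obtain ⟨ρ, hρ⟩ := Complex.exists_root (f := f)
      (by rw [degree_eq_natDegree hf0, hfdeg]; exact_mod_cast m.succ_pos)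
    have hqρ := hfroots ρ hρ
    obtain ⟨f₁, rfl⟩ := dvd_iff_isRoot.mpr hρ
    have hf₁0 : f₁ ≠ 0 := right_ne_zero_of_mul hf0
    have hf₁deg : f₁.natDegree = m := by
      have := natDegree_mul (X_sub_C_ne_zero ρ) hf₁0
      rw [natDegree_X_sub_C, hfdeg] at this
      omega
    have hgρ : ¬ g.IsRoot ρ := fun h ↦ by linarith [hgroots ρ h]
    intro h0
    refine ih (polarDeriv_ne_zero m.succ_ne_zero hgρ) (natDegree_polarDeriv_le hgdeg)
      (natDegree_polarDeriv_eq_or_nonpos hgfull hgroots hqρ)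
      (fun z hz ↦ circleQuad_nonpos_of_isRoot_polarDeriv m.succ_pos hgdeg hgfull hgroots hqρ hz)
      hf₁0 hf₁deg (fun z hz ↦ hfroots z (by rw [IsRoot.def, eval_mul, hz.eq_zero, mul_zero])) ?_
    rw [eval_apolarPoly_eq (natDegree_polarDeriv_le hgdeg) hf₁deg.le 0 ρ,
      ← eval_apolarPoly_X_sub_C_mul, eval_apolarPoly_eq hgdeg hfdeg.le ρ 0]
    exact h0

theorem symFun_ne_zero_of_circleQuad_nonpos {ι : Type*} [Fintype ι] {f : ℂ[X]} (hf0 : f ≠ 0)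
    (hdeg : f.natDegree = Fintype.card ι) (hf : ∀ z, circleQuad α γ β z ≤ 0 → f.eval z ≠ 0)
    {y : ι → ℂ} (hy : ∀ i, circleQuad α γ β (y i) ≤ 0) :
    symFun f y ≠ 0 := by
  set P := ((Finset.univ.val.map y).map (X - C ·)).prod
  have hP : P.Monic := monic_multiset_prod_of_monic _ _ fun _ _ ↦ monic_X_sub_C _
  have hPdeg : P.natDegree = Fintype.card ι := by simp [P]
  have hProots : ∀ z, P.IsRoot z → circleQuad α γ β z ≤ 0 := by
    intro z hz
    rw [← mem_roots hP.ne_zero, roots_multiset_prod_X_sub_C] at hz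
    obtain ⟨i, -, rfl⟩ := Multiset.mem_map.mp hz
    exact hy i
  have hne := eval_zero_apolarPoly_ne_zero hP.ne_zero hPdeg.le (Or.inl hPdeg) hProots hf0 hdeg
    fun z hz ↦ lt_of_not_ge fun h ↦ hf z h hz
  rw [apolarPoly_swap, eval_mul, eval_C, eval_zero_apolarPoly, ← symFun_eq_apol] at hne
  exact right_ne_zero_of_mul (right_ne_zero_of_mul hne)

end CircleQuad
end Walsh

open Walsh

theorem stmt_1_general (D : Set ℂ) (hD : IsCircularDomain D) (n : ℕ) (hn : 1 ≤ n)
    (f : Polynomial ℂ) (hdeg : f.natDegree = n)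
    (hnoroot : ∀ z ∈ D, f.eval z ≠ 0)
    (y : Fin n → ℂ) (hy : ∀ k, y k ∈ D) :
    symFun f y ≠ 0 := by
  have hf0 : f ≠ 0 := ne_zero_of_natDegree_gt (hdeg ▸ hn)
  obtain ⟨α, γ, β, rfl | rfl⟩ := hD
  · have : Nonempty (Fin n) := ⟨⟨0, hn⟩⟩
    obtain ⟨i₀, hi₀⟩ := Finite.exists_max fun i ↦ circleQuad α γ β (y i)
    set c := circleQuad α γ β (y i₀)
    have hc : c < 0 := hy i₀
    have hshift : ∀ z, circleQuad α (γ - c) β z = circleQuad α γ β z - c := fun z ↦ by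
      simp only [circleQuad]; ring
    refine symFun_ne_zero_of_circleQuad_nonpos (α := α) (γ := γ - c) (β := β) hf0
      (by simpa using hdeg) (fun z hz ↦ hnoroot z ?_) fun i ↦ ?_
    · show circleQuad α γ β z < 0
      linarith [hshift z]
    · linarith [hshift (y i), hi₀ i]
  · exact symFun_ne_zero_of_circleQuad_nonpos hf0 (by simpa using hdeg) hnoroot hy

/-- Walsh's Coincidence Theorem. -/
theorem stmt_1 (D : Set ℂ) (hD : IsCircularDomain D) (n : ℕ) (hn : 1 ≤ n)
    (f : Polynomial ℂ) (hmon : f.Monic) (hdeg : f.natDegree = n)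
    (hnoroot : ∀ z ∈ D, f.eval z ≠ 0)
    (y : Fin n → ℂ) (hy : ∀ k, y k ∈ D) :
    symFun f y ≠ 0 :=
  stmt_1_general D hD n hn f hdeg hnoroot y hy
end

section
/- Let q be a monic complex polynomial of degree d ≥ 1 and let 𝔻 denote the open unit disk in ℂ. Then q_∘(𝔻) = q(𝔻) (equivalently, q⁻¹(q(𝔻)) = 𝔻) holds if and only if there exists c ∈ ℂ such that q(z) = z^d + c. -/
open Polynomial

/-!
If `q` is monic of degree `d ≥ 1`, then `|q(0) - u|` is the product of the moduli of the roots
of `q - u`. So if every preimage of `u` lies in `𝔻`, then `|q(0) - u| < 1`, i.e.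
`q_∘(𝔻) ⊆ B(q(0), 1)`. Hence `q_∘(𝔻) = q(𝔻)` forces the monic polynomial `g = q - q(0)` to map
`𝔻` into `𝔻`. Its reversal `z^d g(1/z)` equals `1` at `0` and has modulus at most `1` on the unit
circle, so by the maximum modulus principle it is constant, i.e. `g = z^d`. Conversely, all
preimages of a point under `z^d + c` have the same modulus.
-/

open Metric Set

namespace Polynomial

lemma Monic.sub_C {q : ℂ[X]} (hq : q.Monic) (hdeg : 0 < q.natDegree) (c : ℂ) :
    (q - C c).Monic :=
  hq.sub_of_left (degree_C_le.trans_lt (natDegree_pos_iff_degree_pos.mp hdeg))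

lemma norm_coeff_zero_lt_one_of_roots_mem_ball {p : ℂ[X]} (hp : p.Monic) (hdeg : 0 < p.natDegree)
    (hroots : ∀ z, p.IsRoot z → ‖z‖ < 1) : ‖p.coeff 0‖ < 1 := by
  have hsplit := IsAlgClosed.splits p
  obtain ⟨r, hr⟩ : ∃ r, r ∈ p.roots :=
    Multiset.card_pos_iff_exists_mem.mp (hsplit.natDegree_eq_card_roots ▸ hdeg)
  obtain ⟨s, hs⟩ := Multiset.exists_cons_of_mem hr
  have hroots' : ∀ z ∈ p.roots, ‖z‖ < 1 := fun z hz => hroots z (isRoot_of_mem_roots hz)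
  have hs_le : ‖s.prod‖ ≤ 1 := by
    rw [← normHom_apply, map_multiset_prod]
    simpa using Multiset.prod_map_le_pow_card (f := (normHom : ℂ →*₀ ℝ)) (r := 1)
      (fun z _ => norm_nonneg z)
      (fun z hz => (hroots' z (hs ▸ Multiset.mem_cons_of_mem hz)).le)
  rw [hsplit.coeff_zero_eq_prod_roots_of_monic hp, hs]
  simpa using mul_lt_one_of_nonneg_of_lt_one_left (norm_nonneg r) (hroots' r hr) hs_le

lemma eq_X_pow_of_forall_norm_eq_one {g : ℂ[X]} (hg : g.Monic)
    (h : ∀ z : ℂ, ‖z‖ = 1 → ‖g.eval z‖ ≤ 1) : g = X ^ g.natDegree := by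
  set F := g.reverse
  have hF_zero : F.eval 0 = 1 := by
    rw [← coeff_zero_eq_eval_zero, coeff_zero_reverse, hg.leadingCoeff]
  have hF_sphere : ∀ w ∈ sphere (0 : ℂ) 1, ‖F.eval w‖ ≤ 1 := by
    intro w hw
    rw [mem_sphere_zero_iff_norm] at hw
    have hw0 : w ≠ 0 := norm_ne_zero_iff.mp (by rw [hw]; exact one_ne_zero)
    let : Invertible w⁻¹ := invertibleOfNonzero (inv_ne_zero hw0)
    have hrev := eval₂_reverse_mul_pow (RingHom.id ℂ) w⁻¹ g
    simp only [invOf_eq_inv, inv_inv, eval₂_id] at hrev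
    calc ‖F.eval w‖ = ‖g.eval w⁻¹‖ := by
          rw [← hrev, norm_mul, norm_pow, norm_inv, hw, inv_one, one_pow, mul_one]
      _ ≤ 1 := h _ (by rw [norm_inv, hw, inv_one])
  have hF_const : EqOn (fun z => F.eval z) 1 (closedBall 0 1) := by
    have hdiff : DiffContOnCl ℂ (fun z => F.eval z) (ball (0 : ℂ) 1) :=
      F.differentiable.diffContOnCl
    have hmax : IsMaxOn (norm ∘ fun z => F.eval z) (ball (0 : ℂ) 1) 0 := by
      rw [isMaxOn_iff]
      intro z hz
      simp only [Function.comp_apply, hF_zero, norm_one]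
      refine Complex.norm_le_of_forall_mem_frontier_norm_le isBounded_ball hdiff ?_
        (subset_closure hz)
      rwa [frontier_ball (0 : ℂ) one_ne_zero]
    simpa [hF_zero] using Complex.eqOn_closedBall_of_isMaxOn_norm hdiff hmax
  have hF_eq : F = C 1 := by
    refine eq_of_infinite_eval_eq _ _ (Set.Infinite.mono (fun z hz => ?_)
      (infinite_of_mem_nhds (0 : ℂ) (closedBall_mem_nhds 0 one_pos)))
    simpa using hF_const hz
  calc g = F.reflect g.natDegree := reflect_reflect.symm
    _ = X ^ g.natDegree := by rw [hF_eq, reflect_C, C_1, one_mul]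

lemma eq_X_pow_of_mapsTo_ball {g : ℂ[X]} (hg : g.Monic)
    (h : MapsTo (fun z => g.eval z) (ball 0 1) (ball 0 1)) : g = X ^ g.natDegree := by
  refine eq_X_pow_of_forall_norm_eq_one hg fun z hz => ?_
  have hmaps := h.closure g.continuous
  rw [closure_ball (0 : ℂ) one_ne_zero] at hmaps
  exact mem_closedBall_zero_iff.mp (hmaps (mem_closedBall_zero_iff.mpr hz.le))

end Polynomial

lemma innerImage_subset_image {q : ℂ[X]} (hq : 0 < q.natDegree) (D : Set ℂ) :
    innerImage q D ⊆ (fun z => q.eval z) '' D := by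
  intro u hu
  obtain ⟨z, hz⟩ := Complex.exists_root (f := q - C u) <| by
    rwa [degree_sub_C (natDegree_pos_iff_degree_pos.mp hq), ← natDegree_pos_iff_degree_pos]
  have hzu : q.eval z = u := by simpa [sub_eq_zero] using hz
  exact ⟨z, hu z hzu, hzu⟩

lemma innerImage_ball_subset_ball {q : ℂ[X]} (hq : q.Monic) (hdeg : 0 < q.natDegree) :
    innerImage q (ball 0 1) ⊆ ball (q.eval 0) 1 := by
  intro u hu
  have := norm_coeff_zero_lt_one_of_roots_mem_ball (hq.sub_C hdeg u) (by rwa [natDegree_sub_C])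
    fun z hz => mem_ball_zero_iff.mp (hu z (by simpa [sub_eq_zero] using hz))
  rwa [coeff_sub, coeff_C_zero, coeff_zero_eq_eval_zero, ← dist_eq_norm, dist_comm] at this

lemma image_ball_subset_innerImage_X_pow_add_C {d : ℕ} (hd : d ≠ 0) (c : ℂ) :
    (fun z => (X ^ d + C c).eval z) '' ball 0 1 ⊆ innerImage (X ^ d + C c) (ball 0 1) := by
  rintro _ ⟨z, hz, rfl⟩ w hw
  have hpow : ‖w‖ ^ d = ‖z‖ ^ d := by
    rw [← norm_pow, ← norm_pow, add_left_injective c (by simpa using hw : w ^ d + c = z ^ d + c)]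
  rw [mem_ball_zero_iff] at hz ⊢
  rw [← pow_lt_one_iff_of_nonneg (norm_nonneg w) hd, hpow]
  exact pow_lt_one₀ (norm_nonneg z) hz hd

/-- q_∘(𝔻) = q(𝔻) iff q = z^d + c. -/
theorem stmt_3 (d : ℕ) (hd : 1 ≤ d) (q : Polynomial ℂ) (hq : q.Monic)
    (hdeg : q.natDegree = d) :
    innerImage q (Metric.ball (0 : ℂ) 1) = (fun z => q.eval z) '' Metric.ball (0 : ℂ) 1 ↔
      ∃ c : ℂ, q = Polynomial.X ^ d + Polynomial.C c := by
  have hq_pos : 0 < q.natDegree := hdeg ▸ hd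
  constructor
  · intro h
    set g := q - C (q.eval 0)
    have hmaps : MapsTo (fun z => g.eval z) (ball 0 1) (ball 0 1) := by
      intro z hz
      have := innerImage_ball_subset_ball hq hq_pos (h ▸ mem_image_of_mem _ hz)
      simpa [g, dist_eq_norm] using this
    refine ⟨q.eval 0, ?_⟩
    have hg : g = X ^ g.natDegree := eq_X_pow_of_mapsTo_ball (hq.sub_C hq_pos _) hmaps
    rw [natDegree_sub_C, hdeg] at hg
    rw [← hg, sub_add_cancel]
  · rintro ⟨c, rfl⟩
    exact (innerImage_subset_image hq_pos _).antisymm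
      (image_ball_subset_innerImage_X_pow_add_C (by omega) c)
end

section
/- Let q, r be complex polynomials of the same degree such that r is constant along the fibers of q, i.e. for all z, w ∈ ℂ, q(z) = q(w) implies r(z) = r(w). Then there exist constants b, c ∈ ℂ such that r = b·q + c. -/
open Polynomial

/-- a polynomial of the same degree as q that is constant along
the fibers of q is an affine function of q. -/
theorem stmt_4 (q r : Polynomial ℂ) (hdeg : r.degree = q.degree)
    (h : ∀ z w : ℂ, q.eval z = q.eval w → r.eval z = r.eval w) :
    ∃ b c : ℂ, r = Polynomial.C b * q + Polynomial.C c := by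
  by_cases hq0 : q.natDegree = 0
  · -- q constant, hence r constant
    have hr : r.degree ≤ 0 := by
      rw [hdeg]
      exact (degree_le_natDegree).trans (by simp [hq0])
    refine ⟨0, r.coeff 0, ?_⟩
    rw [← Polynomial.eq_C_of_degree_le_zero hr]; simp
  · have hqne : q ≠ 0 := fun h0 => hq0 (by simp [h0])
    have hrne : r ≠ 0 := by
      intro h0; rw [h0, degree_zero] at hdeg; exact hqne (degree_eq_bot.mp hdeg.symm)
    have hqlc : q.leadingCoeff ≠ 0 := leadingCoeff_ne_zero.mpr hqne
    have hrlc : r.leadingCoeff ≠ 0 := leadingCoeff_ne_zero.mpr hrne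
    set b := r.leadingCoeff / q.leadingCoeff with hb
    have hbne : b ≠ 0 := div_ne_zero hrlc hqlc
    set s := r - C b * q with hs_def
    have hdegCbq : (C b * q).degree = r.degree := by
      rw [degree_C_mul hbne, hdeg]
    have hslt : s.degree < q.degree := by
      have := Polynomial.degree_sub_lt hdegCbq.symm hrne ?_
      · rwa [← hdeg]
      · rw [leadingCoeff_mul, leadingCoeff_C, hb, div_mul_cancel₀ _ hqlc]
    have hs : ∀ z w : ℂ, q.eval z = q.eval w → s.eval z = s.eval w := by
      intro z w hzw
      simp [hs_def, h z w hzw, hzw]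
    -- q has positive degree
    have hqpos : 0 < q.degree := natDegree_pos_iff_degree_pos.mp (Nat.pos_of_ne_zero hq0)
    -- derivative is nonzero
    have hq'ne : q.derivative ≠ 0 := fun h0 => hq0 (natDegree_eq_zero_of_derivative_eq_zero h0)
    -- pick a regular value u
    obtain ⟨u, hu⟩ := Infinite.exists_notMem_finset
      (q.derivative.roots.toFinset.image fun z => q.eval z)
    set p := q - C u with hp_def
    have hpdeg : p.degree = q.degree := degree_sub_C hqpos
    have hpne : p ≠ 0 := fun h0 => by simp [h0] at hpdeg; exact absurd hpdeg.symm (by simp [degree_eq_bot.not.mpr hqne, hqne])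
    have hpnat : p.natDegree = q.natDegree := natDegree_eq_of_degree_eq hpdeg
    have hroots_card : p.roots.card = q.natDegree := by
      rw [← hpnat]
      exact (splits_iff_card_roots.mp (IsAlgClosed.splits p))
    have hnodup : p.roots.Nodup := by
      rw [Multiset.nodup_iff_count_le_one]
      intro z
      by_contra hc
      push_neg at hc
      rw [count_roots] at hc
      have hz' : q.derivative.IsRoot z := by
        have := isRoot_iterate_derivative_of_lt_rootMultiplicity (n := 1) hc
        simpa [hp_def] using this
      have hzp : p.IsRoot z := by
        have : 0 < p.rootMultiplicity z := by omega
        exact (rootMultiplicity_pos hpne).mp this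
      have hqz : q.eval z = u := by
        have := hzp; simp [hp_def, IsRoot, sub_eq_zero] at this; exact this
      exact hu (Finset.mem_image.mpr ⟨z, by rw [Multiset.mem_toFinset]; exact (mem_roots hq'ne).mpr hz', hqz⟩)
    -- roots are nonempty
    have hcard_pos : 0 < p.roots.card := by rw [hroots_card]; omega
    obtain ⟨z₀, hz₀⟩ := Multiset.card_pos_iff_exists_mem.mp hcard_pos
    set c := s.eval z₀ with hc_def
    have hvanish : ∀ z ∈ p.roots, (s - C c).eval z = 0 := by
      intro z hz
      have hqz : q.eval z = q.eval z₀ := by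
        have h1 : q.eval z = u := by
          have := (mem_roots hpne).mp hz
          simpa [hp_def, IsRoot, sub_eq_zero] using this
        have h2 : q.eval z₀ = u := by
          have := (mem_roots hpne).mp hz₀
          simpa [hp_def, IsRoot, sub_eq_zero] using this
        rw [h1, h2]
      simp [hc_def, hs z z₀ hqz]
    have hsc : s - C c = 0 := by
      by_contra hne
      have hsub : p.roots.toFinset ⊆ (s - C c).roots.toFinset := by
        intro z hz
        rw [Multiset.mem_toFinset] at hz ⊢
        exact (mem_roots hne).mpr (hvanish z hz)
      have h1 : p.roots.toFinset.card = q.natDegree := by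
        rw [Multiset.toFinset_card_of_nodup hnodup, hroots_card]
      have h2 : (s - C c).roots.toFinset.card ≤ (s - C c).natDegree :=
        (Multiset.toFinset_card_le _).trans (card_roots' _)
      have h3 : (s - C c).natDegree < q.natDegree := by
        apply natDegree_lt_natDegree hne
        calc (s - C c).degree ≤ max s.degree (C c).degree := degree_sub_le _ _
          _ < q.degree := max_lt hslt ((degree_C_le).trans_lt hqpos)
      have := Finset.card_le_card hsub
      omega
    refine ⟨b, c, ?_⟩
    have : s = C c := sub_eq_zero.mp hsc
    rw [hs_def] at this
    linear_combination this
end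

section
/- Let q be a monic complex polynomial of degree d ≥ 1, let n ≥ 1, and let f be a complex polynomial of degree at most n. Then for all (u₁,…,uₙ) ∈ ℂⁿ, S_{q,n}(f)(u₁,…,uₙ) = Sym_n(T_{q,n}(f))(u₁,…,uₙ). -/
open Polynomial

/-! With `L g = [f∘q, g∘q]_{nd}`, a linear functional of `g`, the two sides are
`S(u) = L(∏ⱼ (X - uⱼ))` and `Sym_n(T)(u)`, where `T(v) = L((X - v)ⁿ)`. The binomial
expansion of `(X - v)ⁿ` gives `T = ∑ₖ (-1)ᵏ (n choose k) L(Xⁿ⁻ᵏ) Xᵏ`, so the binomial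
weights of `Sym_n` cancel, and Vieta's formula `∏ⱼ (X - uⱼ) = ∑ₖ (-1)ᵏ σₖ(u) Xⁿ⁻ᵏ` turns
`L(∏ⱼ (X - uⱼ))` into the same sum `∑ₖ (-1)ᵏ σₖ(u) L(Xⁿ⁻ᵏ)`. -/

open Finset

noncomputable def apolLinear (m : ℕ) (f : ℂ[X]) : ℂ[X] →ₗ[ℂ] ℂ :=
  ∑ k ∈ range (m + 1), ((-1 : ℂ) ^ k * (m.choose k : ℂ)⁻¹ * f.coeff k) • lcoeff ℂ (m - k)

theorem apolLinear_apply (m : ℕ) (f g : ℂ[X]) : apolLinear m f g = apol m f g := by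
  simp [apolLinear, apol, LinearMap.sum_apply]

section Polarization

variable {K : Type*} [Field K] (L : K[X] →ₗ[K] K) (n : ℕ)

noncomputable def polarPoly : K[X] :=
  ∑ m ∈ range (n + 1), C ((-1) ^ m * n.choose m * L (X ^ (n - m))) * X ^ m

theorem coeff_polarPoly {m : ℕ} (hm : m ≤ n) :
    (polarPoly L n).coeff m = (-1) ^ m * n.choose m * L (X ^ (n - m)) := by
  simp only [polarPoly, finsetSum_coeff, coeff_C_mul_X_pow]
  rw [sum_ite_eq, if_pos (mem_range.2 (Nat.lt_succ_of_le hm))]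

theorem eval_polarPoly (v : K) : (polarPoly L n).eval v = L ((X - C v) ^ n) := by
  rw [sub_eq_neg_add, ← C_neg, add_pow]
  simp only [polarPoly, eval_finsetSum, map_sum, eval_mul, eval_C, eval_pow, eval_X]
  refine sum_congr rfl fun m _ => ?_
  rw [← C_pow, ← C_eq_natCast, mul_right_comm (C _), ← C_mul, C_mul', map_smul, smul_eq_mul]
  ring

theorem eq_polarPoly_of_eval [Infinite K] {T : K[X]} (hT : ∀ v, T.eval v = L ((X - C v) ^ n)) :
    T = polarPoly L n :=
  Polynomial.funext fun v => by rw [hT, eval_polarPoly]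

end Polarization

theorem map_prod_X_sub_C {R : Type*} [CommRing R] (L : R[X] →ₗ[R] R) {ι : Type*} [Fintype ι]
    (u : ι → R) :
    L (∏ i, (X - C (u i))) = ∑ m ∈ range (Fintype.card ι + 1),
      (-1) ^ m * MvPolynomial.eval u (MvPolynomial.esymm ι R m) * L (X ^ (Fintype.card ι - m)) := by
  have hprod : ∏ i, (X - C (u i)) = ((univ.val.map u).map fun t => X - C t).prod := by
    rw [Multiset.map_map]; rfl
  rw [hprod, Multiset.prod_X_sub_X_eq_sum_esymm, map_sum, Multiset.card_map, card_val, card_univ]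
  refine sum_congr rfl fun m _ => ?_
  rw [← MvPolynomial.aeval_esymm_eq_multiset_esymm ι R, MvPolynomial.aeval_eq_eval,
    ← mul_assoc, ← C_1, ← C_neg, ← C_pow, ← C_mul, C_mul', map_smul, smul_eq_mul]

theorem symFun_eq_map_prod_X_sub_C {ι : Type*} [Fintype ι] (L : ℂ[X] →ₗ[ℂ] ℂ) {T : ℂ[X]}
    (hT : ∀ v, T.eval v = L ((X - C v) ^ Fintype.card ι)) (u : ι → ℂ) :
    symFun T u = L (∏ i, (X - C (u i))) := by
  rw [eq_polarPoly_of_eval L _ hT, map_prod_X_sub_C, symFun]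
  refine sum_congr rfl fun m hm => ?_
  have hm : m ≤ Fintype.card ι := Nat.lt_succ_iff.1 (mem_range.1 hm)
  have hchoose : ((Fintype.card ι).choose m : ℂ) ≠ 0 := Nat.cast_ne_zero.2 (Nat.choose_pos hm).ne'
  rw [coeff_polarPoly L _ hm]
  field_simp

theorem stmt_5_general (d : ℕ) (q : Polynomial ℂ) (hqd : q.natDegree = d) (n : ℕ)
    (f : Polynomial ℂ) (T : Polynomial ℂ)
    (hT : ∀ u : ℂ, T.eval u = apol (n * d) (f.comp q) ((q - Polynomial.C u) ^ n))
    (u : Fin n → ℂ) :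
    Sfun q n f u = symFun T u := by
  let L := (apolLinear (n * d) (f.comp q)).comp (aeval q).toLinearMap
  have hL (g : ℂ[X]) : L g = apol (n * d) (f.comp q) (g.comp q) := apolLinear_apply _ _ _
  have hTL (v : ℂ) : T.eval v = L ((X - C v) ^ Fintype.card (Fin n)) := by
    rw [hT, hL, Fintype.card_fin, pow_comp, sub_comp, X_comp, C_comp]
  rw [symFun_eq_map_prod_X_sub_C L hTL, hL, Polynomial.prod_comp, Sfun, hqd]
  simp only [sub_comp, X_comp, C_comp]

/-- S_{q,n}(f) = Sym_n(T_{q,n}(f)).  Here T is the unique polynomial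
of degree at most n with T(u) = [f∘q, (q-u)^n]_{nd} for all u. -/
theorem stmt_5 (d : ℕ) (hd : 1 ≤ d) (q : Polynomial ℂ) (hq : q.Monic)
    (hqd : q.natDegree = d) (n : ℕ) (hn : 1 ≤ n)
    (f : Polynomial ℂ) (hf : f.degree ≤ (n : ℕ))
    (T : Polynomial ℂ) (hTdeg : T.degree ≤ (n : ℕ))
    (hT : ∀ u : ℂ, T.eval u = apol (n * d) (f.comp q) ((q - Polynomial.C u) ^ n))
    (u : Fin n → ℂ) :
    Sfun q n f u = symFun T u :=
  stmt_5_general d q hqd n f T hT u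
end

section
/- Let q be a monic complex polynomial of degree d ≥ 1 and let n ≥ 1. Then for every complex polynomial f of degree at most n, deg(T_{q,n}(f)) = deg(f), and the linear map f ↦ T_{q,n}(f) on the space of complex polynomials of degree at most n is bijective. -/
open Polynomial

/-!
Expanding `(q - u)ⁿ = ∑ⱼ (-u)ʲ (n choose j) q^(n-j)` and using bilinearity of the apolarity form
shows that `T_{q,n}(f)` is the explicit polynomial `∑ⱼ (-1)ʲ (n choose j) [f∘q, q^(n-j)]_{nd} Xʲ`,
which is linear in `f`. Since `deg (f∘q) = d·deg f` and `deg q^(n-j) = d(n-j)`, the coefficient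
`[f∘q, q^(n-j)]_{nd}` vanishes for `j > deg f`, and for `j = deg f` only the product of the leading
coefficients survives; so `T_{q,n}` preserves degrees. A degree-preserving linear endomorphism of
the finite-dimensional space of polynomials of degree at most `n` is injective, hence bijective.
-/

open Finset

noncomputable def apolBilin (m : ℕ) : ℂ[X] →ₗ[ℂ] ℂ[X] →ₗ[ℂ] ℂ :=
  LinearMap.mk₂ ℂ (apol m)
    (fun _ _ _ => by
      simp only [apol, coeff_add, ← sum_add_distrib]; exact sum_congr rfl fun _ _ => by ring)
    (fun _ _ _ => by
      simp only [apol, coeff_smul, smul_eq_mul, mul_sum]; exact sum_congr rfl fun _ _ => by ring)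
    (fun _ _ _ => by
      simp only [apol, coeff_add, ← sum_add_distrib]; exact sum_congr rfl fun _ _ => by ring)
    (fun _ _ _ => by
      simp only [apol, coeff_smul, smul_eq_mul, mul_sum]; exact sum_congr rfl fun _ _ => by ring)

theorem apolBilin_apply (m : ℕ) (f g : ℂ[X]) : apolBilin m f g = apol m f g := rfl

theorem apol_eq_zero_of_natDegree_add_lt {m : ℕ} {f g : ℂ[X]}
    (h : f.natDegree + g.natDegree < m) : apol m f g = 0 := by
  refine sum_eq_zero fun k hk => ?_
  rcases le_or_gt k f.natDegree with hkf | hkf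
  · rw [coeff_eq_zero_of_natDegree_lt (p := g) (by omega), mul_zero]
  · rw [coeff_eq_zero_of_natDegree_lt hkf, mul_zero, zero_mul]

theorem apol_eq_of_natDegree_add_eq {m : ℕ} {f g : ℂ[X]} (h : f.natDegree + g.natDegree = m) :
    apol m f g = (-1) ^ f.natDegree * ((m.choose f.natDegree : ℂ))⁻¹ *
      f.leadingCoeff * g.leadingCoeff := by
  rw [apol, sum_eq_single f.natDegree]
  · rw [← h, Nat.add_sub_cancel_left]; rfl
  · intro k hk hkf
    rcases lt_or_gt_of_ne hkf with hkf | hkf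
    · rw [coeff_eq_zero_of_natDegree_lt (p := g) (by omega), mul_zero]
    · rw [coeff_eq_zero_of_natDegree_lt hkf, mul_zero, zero_mul]
  · intro hf; exact absurd (mem_range.mpr (by omega)) hf

theorem Polynomial.bijOn_degreeLE_of_degree_eq {K : Type*} [Field K] {n : ℕ}
    (T : K[X] →ₗ[K] K[X]) (hT : ∀ f : K[X], f.degree ≤ n → (T f).degree = f.degree) :
    Set.BijOn T {f | f.degree ≤ n} {f | f.degree ≤ n} := by
  have hs : {f : K[X] | f.degree ≤ n} = degreeLE K n := Set.ext fun _ => mem_degreeLE.symm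
  have hmaps : ∀ f ∈ degreeLE K n, T f ∈ degreeLE K n := fun f hf =>
    mem_degreeLE.mpr ((hT f (mem_degreeLE.mp hf)).trans_le (mem_degreeLE.mp hf))
  have hinj : Set.InjOn T (degreeLE K n) := fun f hf g hg hfg => by
    have hfg' := hT (f - g) (mem_degreeLE.mp (sub_mem hf hg))
    rwa [map_sub, hfg, sub_self, degree_zero, eq_comm, degree_eq_bot, sub_eq_zero] at hfg'
  have : FiniteDimensional K (degreeLE K n) := by
    classical
    rw [degreeLE_eq_span_X_pow]
    exact FiniteDimensional.span_finset K _
  rw [hs]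
  exact ⟨hmaps, hinj, (LinearMap.injOn_iff_surjOn hmaps).mp hinj⟩

noncomputable def apolarTransform (q : ℂ[X]) (n : ℕ) : ℂ[X] →ₗ[ℂ] ℂ[X] where
  toFun f := ∑ j ∈ range (n + 1),
    monomial j ((-1) ^ j * n.choose j * apol (n * q.natDegree) (f.comp q) (q ^ (n - j)))
  map_add' f g := by
    simp only [add_comp, ← apolBilin_apply, map_add, LinearMap.add_apply, mul_add,
      sum_add_distrib]
  map_smul' a f := by
    simp only [smul_comp, ← apolBilin_apply, map_smul, LinearMap.smul_apply, smul_eq_mul,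
      RingHom.id_apply, smul_sum, smul_monomial]
    exact sum_congr rfl fun _ _ => by rw [mul_left_comm]

theorem apolarTransform_apply (q : ℂ[X]) (n : ℕ) (f : ℂ[X]) :
    apolarTransform q n f = ∑ j ∈ range (n + 1),
      monomial j ((-1) ^ j * n.choose j * apol (n * q.natDegree) (f.comp q) (q ^ (n - j))) :=
  rfl

theorem Polynomial.sub_C_pow_eq_sum {R : Type*} [CommRing R] (q : R[X]) (u : R) (n : ℕ) :
    (q - C u) ^ n = ∑ j ∈ range (n + 1), ((-u) ^ j * n.choose j) • q ^ (n - j) := by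
  rw [sub_eq_neg_add, ← C_neg, add_pow]
  refine sum_congr rfl fun j _ => ?_
  rw [smul_eq_C_mul, C_mul, C_pow, ← C_eq_natCast]
  ring

theorem eval_apolarTransform (q : ℂ[X]) (n : ℕ) (f : ℂ[X]) (u : ℂ) :
    (apolarTransform q n f).eval u = apol (n * q.natDegree) (f.comp q) ((q - C u) ^ n) := by
  rw [sub_C_pow_eq_sum, ← apolBilin_apply, map_sum]
  simp only [apolarTransform_apply, eval_finsetSum, eval_monomial, map_smul, apolBilin_apply,
    smul_eq_mul]
  exact sum_congr rfl fun j _ => by ring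

theorem coeff_apolarTransform (q : ℂ[X]) (n : ℕ) (f : ℂ[X]) (j : ℕ) :
    (apolarTransform q n f).coeff j = if j ≤ n then
      (-1) ^ j * n.choose j * apol (n * q.natDegree) (f.comp q) (q ^ (n - j)) else 0 := by
  rw [apolarTransform_apply, finsetSum_coeff]
  simp only [coeff_monomial, sum_ite_eq', mem_range, Nat.lt_succ_iff]

theorem degree_apolarTransform {q : ℂ[X]} (hq : 0 < q.natDegree) {n : ℕ} {f : ℂ[X]}
    (hf : f.degree ≤ n) : (apolarTransform q n f).degree = f.degree := by
  rcases eq_or_ne f 0 with rfl | hf0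
  · rw [map_zero]
  have hfn : f.natDegree ≤ n := natDegree_le_iff_degree_le.mpr hf
  rw [degree_eq_natDegree hf0]
  refine degree_eq_of_le_of_coeff_ne_zero ?_ ?_
  · refine degree_le_iff_coeff_zero _ _ |>.mpr fun j hj => ?_
    have hj : f.natDegree < j := by exact_mod_cast hj
    rw [coeff_apolarTransform]
    split_ifs with hjn
    · rw [apol_eq_zero_of_natDegree_add_lt, mul_zero]
      rw [natDegree_comp, natDegree_pow, ← add_mul]
      exact Nat.mul_lt_mul_of_pos_right (by omega) hq
    · rfl
  · have hdeg : (f.comp q).natDegree + (q ^ (n - f.natDegree)).natDegree = n * q.natDegree := by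
      rw [natDegree_comp, natDegree_pow, ← add_mul, Nat.add_sub_cancel' hfn]
    have hq0 : q ≠ 0 := ne_zero_of_natDegree_gt hq
    have hchoose : ((n * q.natDegree).choose (f.natDegree * q.natDegree) : ℂ) ≠ 0 :=
      Nat.cast_ne_zero.mpr (Nat.choose_pos (Nat.mul_le_mul_right _ hfn)).ne'
    rw [coeff_apolarTransform, if_pos hfn, apol_eq_of_natDegree_add_eq hdeg, natDegree_comp,
      leadingCoeff_comp hq.ne', leadingCoeff_pow]
    simp [hf0, hq0, hchoose, (Nat.choose_pos hfn).ne']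

theorem stmt_6_general (d : ℕ) (hd : 1 ≤ d) (q : Polynomial ℂ)
    (hqd : q.natDegree = d) (n : ℕ)
    (T : Polynomial ℂ → Polynomial ℂ)
    (hT : ∀ f : Polynomial ℂ, f.degree ≤ (n : ℕ) → ∀ u : ℂ,
      (T f).eval u = apol (n * d) (f.comp q) ((q - Polynomial.C u) ^ n)) :
    (∀ f : Polynomial ℂ, f.degree ≤ (n : ℕ) → (T f).degree = f.degree) ∧
    (∀ f g : Polynomial ℂ, f.degree ≤ (n : ℕ) → g.degree ≤ (n : ℕ) → ∀ a : ℂ,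
      T (a • f + g) = a • T f + T g) ∧
    Set.BijOn T {f : Polynomial ℂ | f.degree ≤ (n : ℕ)}
      {f : Polynomial ℂ | f.degree ≤ (n : ℕ)} := by
  subst hqd
  have hTeq : Set.EqOn (apolarTransform q n) T {f | f.degree ≤ n} := fun f hf =>
    Polynomial.funext fun u => by rw [hT f hf u, eval_apolarTransform]
  refine ⟨fun f hf => hTeq hf ▸ degree_apolarTransform hd hf, fun f g hf hg a => ?_,
    (bijOn_degreeLE_of_degree_eq _ fun _ => degree_apolarTransform hd).congr hTeq⟩
  have hafg : (a • f + g).degree ≤ n := mem_degreeLE.mp <|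
    add_mem (Submodule.smul_mem _ a (mem_degreeLE.mpr hf)) (mem_degreeLE.mpr hg)
  rw [← hTeq hf, ← hTeq hg, ← hTeq hafg, map_add, map_smul]

/-- T_{q,n} preserves degrees and is a bijective (linear) map on the
space of polynomials of degree at most n. -/
theorem stmt_6 (d : ℕ) (hd : 1 ≤ d) (q : Polynomial ℂ) (hq : q.Monic)
    (hqd : q.natDegree = d) (n : ℕ) (hn : 1 ≤ n)
    (T : Polynomial ℂ → Polynomial ℂ)
    (hTdeg : ∀ f : Polynomial ℂ, f.degree ≤ (n : ℕ) → (T f).degree ≤ (n : ℕ))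
    (hT : ∀ f : Polynomial ℂ, f.degree ≤ (n : ℕ) → ∀ u : ℂ,
      (T f).eval u = apol (n * d) (f.comp q) ((q - Polynomial.C u) ^ n)) :
    (∀ f : Polynomial ℂ, f.degree ≤ (n : ℕ) → (T f).degree = f.degree) ∧
    (∀ f g : Polynomial ℂ, f.degree ≤ (n : ℕ) → g.degree ≤ (n : ℕ) → ∀ a : ℂ,
      T (a • f + g) = a • T f + T g) ∧
    Set.BijOn T {f : Polynomial ℂ | f.degree ≤ (n : ℕ)}
      {f : Polynomial ℂ | f.degree ≤ (n : ℕ)} :=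
  stmt_6_general d hd q hqd n T hT
end

section
/- Let q be a monic complex polynomial of degree d ≥ 1, let n ≥ 1 and let 0 ≤ k ≤ n. Then T_{q,n}(z^k) has degree exactly k, and the coefficient of z^k in T_{q,n}(z^k) equals (-1)^{k(d+1)} · (n choose k) / (nd choose kd). -/
open Polynomial

section Aux

variable (d : ℕ) (q : Polynomial ℂ)

lemma aux_coeff_pow_zero (hqd : q.natDegree = d) (i r : ℕ) (hr : i * d < r) :
    (q ^ i).coeff r = 0 := by
  apply Polynomial.coeff_eq_zero_of_natDegree_lt
  calc (q ^ i).natDegree ≤ i * q.natDegree := Polynomial.natDegree_pow_le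
    _ < r := by rwa [hqd]

lemma aux_coeff_pow_top (hq : q.Monic) (hqd : q.natDegree = d) (i : ℕ) :
    (q ^ i).coeff (i * d) = 1 := by
  have h := (hq.pow (n := i)).coeff_natDegree
  rwa [Polynomial.natDegree_pow, hqd] at h

/-- Lemma A : `apol (n*d) (q^k) (q^i) = 0` when `i < n - k`. -/
lemma aux_apol_zero (hd : 1 ≤ d) (hqd : q.natDegree = d)
    (n k i : ℕ) (hk : k ≤ n) (hi : i < n - k) :
    apol (n * d) (q ^ k) (q ^ i) = 0 := by
  unfold apol
  refine Finset.sum_eq_zero fun j hj => ?_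
  rcases le_or_gt j (k * d) with h | h
  · have hik : i * d + k * d < n * d := by
      have h1 : i + k < n := by omega
      have h2 : (i + k) * d < n * d := (Nat.mul_lt_mul_right (by omega)).mpr h1
      rw [Nat.add_mul] at h2
      exact h2
    have h2 : i * d < n * d - j := by omega
    rw [aux_coeff_pow_zero d q hqd i _ h2, mul_zero]
  · rw [aux_coeff_pow_zero d q hqd k j h]
    ring

/-- Lemma B -/
lemma aux_apol_diag (hd : 1 ≤ d) (hq : q.Monic) (hqd : q.natDegree = d)
    (n k : ℕ) (hk : k ≤ n) :
    apol (n * d) (q ^ k) (q ^ (n - k)) = (-1 : ℂ) ^ (k * d) * (((n * d).choose (k * d) : ℂ))⁻¹ := by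
  unfold apol
  have hkd : k * d ≤ n * d := Nat.mul_le_mul_right d hk
  have hsplit : (n - k) * d + k * d = n * d := by
    rw [← Nat.add_mul]
    congr 1
    omega
  rw [Finset.sum_eq_single (k * d)]
  · rw [aux_coeff_pow_top d q hq hqd k]
    have : n * d - k * d = (n - k) * d := by omega
    rw [this, aux_coeff_pow_top d q hq hqd (n - k)]
    ring
  · intro j hj hjne
    rcases lt_or_lt_iff_ne.mpr hjne with h | h
    · have h2 : (n - k) * d < n * d - j := by omega
      rw [aux_coeff_pow_zero d q hqd (n - k) _ h2, mul_zero]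
    · rw [aux_coeff_pow_zero d q hqd k j h]; ring
  · intro h
    exact absurd (Finset.mem_range.mpr (by omega)) h

end Aux

/-- T_{q,n}(z^k) has degree exactly k and its leading coefficient is
(-1)^{k(d+1)} (n choose k)/(nd choose kd). -/
theorem stmt_7 (d : ℕ) (hd : 1 ≤ d) (q : Polynomial ℂ) (hq : q.Monic)
    (hqd : q.natDegree = d) (n k : ℕ) (hn : 1 ≤ n) (hk : k ≤ n)
    (T : Polynomial ℂ) (hTdeg : T.degree ≤ (n : ℕ))
    (hT : ∀ u : ℂ, T.eval u
      = apol (n * d) ((Polynomial.X ^ k).comp q) ((q - Polynomial.C u) ^ n)) :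
    T.degree = (k : ℕ) ∧
      T.coeff k = (-1 : ℂ) ^ (k * (d + 1)) * (n.choose k : ℂ) / ((n * d).choose (k * d) : ℂ) := by
  set c : ℕ → ℂ := fun t =>
    ((n.choose (n - t) : ℂ)) * (-1 : ℂ) ^ t * apol (n * d) (q ^ k) (q ^ (n - t)) with hc
  set P : Polynomial ℂ := ∑ t ∈ Finset.range (n + 1), Polynomial.C (c t) * Polynomial.X ^ t
    with hP
  have hPcoeff : ∀ s : ℕ, P.coeff s = if s ≤ n then c s else 0 := by
    intro s
    rw [hP, Polynomial.finset_sum_coeff]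
    simp only [Polynomial.coeff_C_mul, Polynomial.coeff_X_pow]
    by_cases hs : s ≤ n
    · rw [if_pos hs, Finset.sum_eq_single s]
      · simp
      · intro b _ hb; simp [hb.symm]
      · intro h; exact absurd (Finset.mem_range.mpr (by omega)) h
    · rw [if_neg hs]
      refine Finset.sum_eq_zero fun t ht => ?_
      rw [Finset.mem_range] at ht
      rw [if_neg (by omega)]
      ring
  have hTP : T = P := by
    apply Polynomial.funext
    intro u
    rw [hT u]
    have hexp : (q - Polynomial.C u) ^ n
        = ∑ i ∈ Finset.range (n + 1), q ^ i * Polynomial.C ((-u) ^ (n - i) * (n.choose i : ℂ)) := by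
      rw [sub_eq_add_neg, add_pow]
      refine Finset.sum_congr rfl fun i _ => ?_
      simp [← map_pow, ← map_neg, mul_assoc]
    rw [Polynomial.X_pow_comp, hexp]
    unfold apol
    have hcoeffsum : ∀ r : ℕ,
        (∑ i ∈ Finset.range (n + 1),
          q ^ i * Polynomial.C ((-u) ^ (n - i) * (n.choose i : ℂ))).coeff r
        = ∑ i ∈ Finset.range (n + 1),
            (q ^ i).coeff r * ((-u) ^ (n - i) * (n.choose i : ℂ)) := by
      intro r
      rw [Polynomial.finset_sum_coeff]
      exact Finset.sum_congr rfl fun i _ => Polynomial.coeff_mul_C _ _ _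
    simp only [hcoeffsum, Finset.mul_sum]
    rw [Finset.sum_comm]
    rw [hP]
    simp only [Polynomial.eval_finset_sum, Polynomial.eval_mul, Polynomial.eval_C,
      Polynomial.eval_pow, Polynomial.eval_X]
    rw [← Finset.sum_range_reflect (fun t => c t * u ^ t) (n + 1)]
    refine Finset.sum_congr rfl fun i hi => ?_
    simp only [Finset.mem_range] at hi
    have hni : n + 1 - 1 - i = n - i := by omega
    rw [hni, hc]
    simp only
    have hinv : n - (n - i) = i := by omega
    rw [hinv]
    unfold apol
    rw [mul_comm ((n.choose i : ℂ) * (-1 : ℂ) ^ (n - i)), mul_assoc, Finset.sum_mul]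
    refine Finset.sum_congr rfl fun j _ => ?_
    have hneg : (-u) ^ (n - i) = (-1 : ℂ) ^ (n - i) * u ^ (n - i) := by
      rw [neg_pow]
    rw [hneg]
    ring
  have hnd : k * d ≤ n * d := Nat.mul_le_mul_right d hk
  have hchoose_ne : (((n * d).choose (k * d) : ℂ)) ≠ 0 :=
    Nat.cast_ne_zero.mpr (Nat.choose_pos hnd).ne'
  have hcoeffk : T.coeff k
      = (-1 : ℂ) ^ (k * (d + 1)) * (n.choose k : ℂ) / ((n * d).choose (k * d) : ℂ) := by
    rw [hTP, hPcoeff k, if_pos hk, hc]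
    simp only
    rw [aux_apol_diag d q hd hq hqd n k hk, Nat.choose_symm hk]
    have hpow : (-1 : ℂ) ^ (k * (d + 1)) = (-1 : ℂ) ^ (k * d) * (-1 : ℂ) ^ k := by
      rw [Nat.mul_succ, pow_add]
    rw [hpow, div_eq_mul_inv]
    ring
  refine ⟨?_, hcoeffk⟩
  have hcoeffk_ne : T.coeff k ≠ 0 := by
    rw [hcoeffk]
    apply div_ne_zero
    · exact mul_ne_zero (by simp) (Nat.cast_ne_zero.mpr (Nat.choose_pos hk).ne')
    · exact hchoose_ne
  have hle : T.degree ≤ (k : ℕ) := by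
    rw [Polynomial.degree_le_iff_coeff_zero]
    intro m hm
    rw [Nat.cast_lt] at hm
    rw [hTP, hPcoeff m]
    split
    · next h =>
      rw [hc]
      simp only
      rw [aux_apol_zero d q hd hqd n k (n - m) hk (by omega)]
      ring
    · rfl
  exact le_antisymm hle (Polynomial.le_degree_of_ne_zero hcoeffk_ne)
end

section
/- Let q be a monic complex polynomial of degree d ≥ 1 and let n ≥ 1. Then for all complex polynomials f, g of degree at most n, [f∘q, g∘q]_{nd} = [T_{q,n}(f), g]_n. -/
open Polynomial

lemma apol_sum_right (m : ℕ) (f : Polynomial ℂ) {ι : Type*} (s : Finset ι)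
    (g : ι → Polynomial ℂ) :
    apol m f (∑ i ∈ s, g i) = ∑ i ∈ s, apol m f (g i) := by
  unfold apol
  rw [Finset.sum_comm]
  simp [Polynomial.finset_sum_coeff, Finset.mul_sum]

lemma apol_Cmul_right (m : ℕ) (f : Polynomial ℂ) (c : ℂ) (g : Polynomial ℂ) :
    apol m f (Polynomial.C c * g) = c * apol m f g := by
  unfold apol
  rw [Finset.mul_sum]
  refine Finset.sum_congr rfl fun k _ => ?_
  rw [Polynomial.coeff_C_mul]
  ring

/-- [f∘q, g∘q]_{nd} = [T_{q,n}(f), g]_n. -/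
theorem stmt_8 (d : ℕ) (hd : 1 ≤ d) (q : Polynomial ℂ) (hq : q.Monic)
    (hqd : q.natDegree = d) (n : ℕ) (hn : 1 ≤ n)
    (f g : Polynomial ℂ) (hf : f.degree ≤ (n : ℕ)) (hg : g.degree ≤ (n : ℕ))
    (T : Polynomial ℂ) (hTdeg : T.degree ≤ (n : ℕ))
    (hT : ∀ u : ℂ, T.eval u = apol (n * d) (f.comp q) ((q - Polynomial.C u) ^ n)) :
    apol (n * d) (f.comp q) (g.comp q) = apol n T g := by
  set c : ℕ → ℂ := fun k => apol (n * d) (f.comp q) (q ^ k) with hc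
  set P : Polynomial ℂ :=
    ∑ j ∈ Finset.range (n + 1),
      Polynomial.C ((-1 : ℂ) ^ j * (n.choose j : ℂ) * c (n - j)) * X ^ j with hP
  have hTP : T = P := by
    apply Polynomial.funext
    intro u
    rw [hT u]
    have hbin : (q - Polynomial.C u) ^ n
        = ∑ k ∈ Finset.range (n + 1),
            Polynomial.C ((-u) ^ (n - k) * (n.choose k : ℂ)) * q ^ k := by
      rw [sub_eq_add_neg, ← Polynomial.C_neg, add_pow]
      refine Finset.sum_congr rfl fun k _ => ?_
      rw [← Polynomial.C_pow, map_mul, Polynomial.C_eq_natCast]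
      ring
    rw [hbin, apol_sum_right]
    simp only [apol_Cmul_right]
    rw [hP, Polynomial.eval_finset_sum]
    simp only [Polynomial.eval_mul, Polynomial.eval_C, Polynomial.eval_pow,
      Polynomial.eval_X]
    rw [← Finset.sum_range_reflect]
    simp only [Nat.add_sub_cancel]
    refine Finset.sum_congr rfl fun j hj => ?_
    have hj' : j ≤ n := Nat.lt_succ_iff.mp (Finset.mem_range.mp hj)
    rw [Nat.sub_sub_self hj', Nat.choose_symm hj', neg_pow]
    show (-1 : ℂ) ^ j * u ^ j * (n.choose j : ℂ) * c (n - j)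
        = (-1 : ℂ) ^ j * (n.choose j : ℂ) * c (n - j) * u ^ j
    ring
  have hPcoeff : ∀ j ≤ n, P.coeff j = (-1 : ℂ) ^ j * (n.choose j : ℂ) * c (n - j) := by
    intro j hj
    rw [hP, Polynomial.finset_sum_coeff, Finset.sum_eq_single j]
    · rw [Polynomial.coeff_C_mul, Polynomial.coeff_X_pow, if_pos rfl, mul_one]
    · intro b _ hbj
      rw [Polynomial.coeff_C_mul, Polynomial.coeff_X_pow, if_neg (Ne.symm hbj), mul_zero]
    · intro h
      exact absurd (Finset.mem_range.mpr (Nat.lt_succ_of_le hj)) h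
  have hgdeg : g.natDegree < n + 1 :=
    Nat.lt_succ_of_le (Polynomial.natDegree_le_iff_degree_le.mpr hg)
  have hgexp : g.comp q = ∑ i ∈ Finset.range (n + 1), Polynomial.C (g.coeff i) * q ^ i := by
    conv_lhs => rw [Polynomial.as_sum_range' g (n + 1) hgdeg]
    simp [Polynomial.comp, Polynomial.eval₂_finset_sum, Polynomial.eval₂_monomial]
  have hRHS : apol n P g = ∑ i ∈ Finset.range (n + 1), g.coeff i * c i := by
    rw [← Finset.sum_range_reflect (fun i => g.coeff i * c i) (n + 1)]
    simp only [Nat.add_sub_cancel]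
    unfold apol
    refine Finset.sum_congr rfl fun k hk => ?_
    have hk' : k ≤ n := Nat.lt_succ_iff.mp (Finset.mem_range.mp hk)
    rw [hPcoeff k hk']
    have h1 : ((-1 : ℂ)) ^ k * ((-1 : ℂ)) ^ k = 1 := by
      rw [← mul_pow]; norm_num
    have hch : ((n.choose k : ℂ))⁻¹ * (n.choose k : ℂ) = 1 :=
      inv_mul_cancel₀ (by exact_mod_cast (Nat.choose_pos hk').ne')
    calc (-1 : ℂ) ^ k * ((n.choose k : ℂ))⁻¹ *
            ((-1 : ℂ) ^ k * (n.choose k : ℂ) * c (n - k)) * g.coeff (n - k)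
        = ((-1 : ℂ) ^ k * (-1 : ℂ) ^ k) * (((n.choose k : ℂ))⁻¹ * (n.choose k : ℂ)) *
            (g.coeff (n - k) * c (n - k)) := by ring
      _ = g.coeff (n - k) * c (n - k) := by rw [h1, hch]; ring
  rw [hgexp, apol_sum_right]
  simp only [apol_Cmul_right]
  rw [hTP, hRHS]
end

section
/- (Generalized Grace theorem) Let D ⊆ ℂ be a circular domain, let q be a monic complex polynomial of degree d ≥ 1, and let f, g be complex polynomials, both of degree exactly n ≥ 1, which are q-apolar. If all zeros of f lie in q_∘(D), then g has at least one zero in q(D). -/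
open Polynomial

/-!
Substituting `q` reduces the theorem to Grace's theorem for `F = f ∘ q` and `G = g ∘ q`, both of
degree `N = n d`: the zeros of `F` lie in `D`, and a zero `z ∈ D` of `G` gives the zero `q z ∈ q(D)`
of `g`.

Grace's theorem is proved by induction on `N`, splitting `G` into linear factors `X - w` with
`w ∉ D`. One factor is peeled off by `[F, (X - w) H]_N = N⁻¹ [A_w F, H]_{N-1}`, where
`A_w F = N F + (w - X) F'` is the polar derivative, and `A_w F` again has its zeros in `D`
(Laguerre): at a zero `ζ ∉ D` of `A_w F` the points `1 / (ζ - r)`, `r` running over the zeros of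
`F`, would have mean `1 / (ζ - w)`, whereas `z ↦ 1 / (ζ - z)` maps `D` into a convex circular
domain that does not contain `1 / (ζ - w)`. If `A_w F` drops degree for every factor, all the `w`
are one point `c` and the form equals `F(c) ≠ 0`.
-/

def circleFn (α : ℝ) (β : ℂ) (γ : ℝ) (z : ℂ) : ℝ :=
  α * Complex.normSq z + ((starRingEnd ℂ) β * z).re + γ

theorem circleFn_eq_add (α : ℝ) (β : ℂ) (γ : ℝ) (t x : ℂ) :
    circleFn α β γ x = circleFn α β γ t + α * Complex.normSq (x - t)
      + ((starRingEnd ℂ) (2 * α * t + β) * (x - t)).re := by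
  simp only [circleFn, map_add, map_mul, Complex.conj_ofReal, Complex.normSq_apply,
    Complex.mul_re, Complex.add_re, Complex.sub_re, Complex.sub_im, Complex.conj_re,
    Complex.conj_im, Complex.ofReal_re, Complex.ofReal_im, Complex.mul_im, Complex.add_im]
  norm_num
  ring

theorem sum_map_circleFn (α : ℝ) (β : ℂ) (γ : ℝ) (s : Multiset ℂ) (t : ℂ) :
    (s.map (circleFn α β γ)).sum = s.card * circleFn α β γ t
      + α * (s.map fun x => Complex.normSq (x - t)).sum
      + ((starRingEnd ℂ) (2 * α * t + β) * (s.sum - s.card * t)).re := by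
  induction s using Multiset.induction with
  | empty => simp
  | cons x s ih =>
    simp only [Multiset.map_cons, Multiset.sum_cons, Multiset.card_cons, ih,
      circleFn_eq_add α β γ t x, Nat.cast_succ, mul_add, add_mul, mul_sub, one_mul,
      Complex.add_re, Complex.sub_re]
    ring

theorem card_mul_circleFn_le_sum {α : ℝ} (hα : 0 ≤ α) (β : ℂ) (γ : ℝ) {s : Multiset ℂ} {t : ℂ}
    (ht : s.sum = s.card * t) :
    s.card * circleFn α β γ t ≤ (s.map (circleFn α β γ)).sum := by
  rw [sum_map_circleFn α β γ s t, ht, sub_self, mul_zero, Complex.zero_re, add_zero,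
    le_add_iff_nonneg_right]
  exact mul_nonneg hα (Multiset.sum_nonneg fun _ hx => by
    obtain ⟨_, _, rfl⟩ := Multiset.mem_map.1 hx; exact Complex.normSq_nonneg _)

theorem circleFn_mul_normSq_one_div_sub (α : ℝ) (β : ℂ) (γ : ℝ) {ζ z : ℂ} (hz : z ≠ ζ) :
    circleFn α β γ z * Complex.normSq (1 / (ζ - z))
      = circleFn (circleFn α β γ ζ) (-(starRingEnd ℂ) (2 * α * ζ + β)) α (1 / (ζ - z)) := by
  obtain ⟨e, he, rfl⟩ : ∃ e, e ≠ 0 ∧ z = ζ - e := ⟨ζ - z, sub_ne_zero.2 hz.symm, by ring⟩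
  have hne : Complex.normSq e ≠ 0 := Complex.normSq_eq_zero.not.2 he
  rw [circleFn_eq_add α β γ ζ, sub_sub_cancel, sub_sub_cancel_left]
  simp only [circleFn, map_neg, Complex.conj_conj, one_div, Complex.normSq_inv,
    Complex.normSq_neg, neg_mul, Complex.neg_re, Complex.mul_re, Complex.inv_re, Complex.inv_im,
    Complex.conj_re, Complex.conj_im, Complex.neg_im]
  field_simp
  ring

theorem nonneg_of_notMem_sublevel {p : ℂ → ℝ} {D : Set ℂ}
    (hD : D = {z | p z < 0} ∨ D = {z | p z ≤ 0}) {z : ℂ} (hz : z ∉ D) : 0 ≤ p z := by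
  rcases hD with rfl | rfl <;> simp only [Set.mem_ofPred_eq, not_lt, not_le] at hz <;> linarith

theorem mul_lt_mul_of_mem_of_notMem_sublevel {p : ℂ → ℝ} {D : Set ℂ}
    (hD : D = {z | p z < 0} ∨ D = {z | p z ≤ 0}) {r w : ℂ} (hr : r ∈ D) (hw : w ∉ D)
    {a b : ℝ} (ha : 0 < a) (hb : 0 < b) : p r * a < p w * b := by
  rcases hD with rfl | rfl <;> simp only [Set.mem_ofPred_eq, not_lt, not_le] at hr hw
  · nlinarith
  · nlinarith

theorem IsCircularDomain.sum_one_div_sub_ne {D : Set ℂ} (hD : IsCircularDomain D)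
    {R : Multiset ℂ} (hR0 : R ≠ 0) (hR : ∀ r ∈ R, r ∈ D) {w ζ : ℂ} (hw : w ∉ D) (hζ : ζ ∉ D)
    (hwζ : w ≠ ζ) :
    (R.map fun r => 1 / (ζ - r)).sum ≠ R.card * (1 / (ζ - w)) := by
  intro hmean
  obtain ⟨α, γ, β, hDp⟩ := hD
  set p := circleFn α β γ
  set ψ := circleFn (p ζ) (-(starRingEnd ℂ) (2 * α * ζ + β)) α
  have hψ : ∀ z ≠ ζ, ψ (1 / (ζ - z)) = p z * Complex.normSq (1 / (ζ - z)) := fun z hz =>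
    (circleFn_mul_normSq_one_div_sub α β γ hz).symm
  have hpos : ∀ z ≠ ζ, 0 < Complex.normSq (1 / (ζ - z)) := fun z hz =>
    Complex.normSq_pos.2 (one_div_ne_zero (sub_ne_zero.2 hz.symm))
  have hRζ : ∀ r ∈ R, r ≠ ζ := fun r hr h => hζ (h ▸ hR r hr)
  have hle := card_mul_circleFn_le_sum (nonneg_of_notMem_sublevel (p := p) hDp hζ)
    (-(starRingEnd ℂ) (2 * α * ζ + β)) α (s := R.map fun r => 1 / (ζ - r))
    (by rwa [Multiset.card_map])
  rw [Multiset.card_map] at hle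
  have hlt : ((R.map fun r => 1 / (ζ - r)).map ψ).sum < R.card * ψ (1 / (ζ - w)) := by
    calc ((R.map fun r => 1 / (ζ - r)).map ψ).sum
        = (R.map fun r => p r * Complex.normSq (1 / (ζ - r))).sum := by
          rw [Multiset.map_map]
          exact congrArg _ (Multiset.map_congr rfl fun r hr => hψ r (hRζ r hr))
      _ < (R.map fun _ => p w * Complex.normSq (1 / (ζ - w))).sum :=
          Multiset.sum_lt_sum_of_nonempty hR0 fun r hr =>
            mul_lt_mul_of_mem_of_notMem_sublevel (p := p) hDp (hR r hr) hw (hpos r (hRζ r hr))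
              (hpos w hwζ)
      _ = R.card * ψ (1 / (ζ - w)) := by
          rw [Multiset.map_const', Multiset.sum_replicate, nsmul_eq_mul, hψ w hwζ]
  exact hlt.not_ge hle

section polarDeriv

variable {R : Type*} [CommRing R]

noncomputable def polarDeriv (n : ℕ) (w : R) (f : R[X]) : R[X] :=
  C (n : R) * f + (C w - X) * derivative f

theorem eval_polarDeriv (n : ℕ) (w : R) (f : R[X]) (z : R) :
    (polarDeriv n w f).eval z = n * f.eval z + (w - z) * f.derivative.eval z := by
  simp [polarDeriv]

theorem coeff_polarDeriv (n : ℕ) (w : R) (f : R[X]) (k : ℕ) :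
    (polarDeriv n w f).coeff k
      = ((n : R) - k) * f.coeff k + ((k : R) + 1) * w * f.coeff (k + 1) := by
  rw [polarDeriv, coeff_add, coeff_C_mul, sub_mul, coeff_sub, coeff_C_mul, coeff_derivative]
  cases k with
  | zero => simp
  | succ m =>
    rw [coeff_X_mul, coeff_derivative]
    push_cast
    ring

theorem natDegree_polarDeriv_le {n : ℕ} (w : R) {f : R[X]} (hf : f.natDegree ≤ n + 1) :
    (polarDeriv (n + 1) w f).natDegree ≤ n := by
  rw [natDegree_le_iff_coeff_eq_zero]
  intro m hm
  rw [coeff_polarDeriv, coeff_eq_zero_of_natDegree_lt (show f.natDegree < m + 1 by omega),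
    mul_zero, add_zero]
  obtain rfl | hm := eq_or_lt_of_le (Nat.succ_le_of_lt hm)
  · simp
  · rw [coeff_eq_zero_of_natDegree_lt (by omega : f.natDegree < m), mul_zero]

end polarDeriv

theorem eq_of_coeff_polarDeriv_eq_zero {K : Type*} [Field K] [CharZero K] {n : ℕ} {f : K[X]}
    (hf : f.coeff (n + 1) ≠ 0) {w w' : K} (hw : (polarDeriv (n + 1) w f).coeff n = 0)
    (hw' : (polarDeriv (n + 1) w' f).coeff n = 0) : w = w' := by
  rw [coeff_polarDeriv] at hw hw'
  have h : ((n : K) + 1) * f.coeff (n + 1) * (w - w') = 0 := by linear_combination hw - hw'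
  exact sub_eq_zero.1 ((mul_eq_zero.1 h).resolve_left
    (mul_ne_zero (Nat.cast_add_one_ne_zero n) hf))

theorem IsCircularDomain.isRoot_polarDeriv_mem {D : Set ℂ} (hD : IsCircularDomain D) {f : ℂ[X]}
    (hf : 0 < f.natDegree) (hroots : ∀ z, f.IsRoot z → z ∈ D) {w : ℂ} (hw : w ∉ D) {ζ : ℂ}
    (hζ : (polarDeriv f.natDegree w f).IsRoot ζ) : ζ ∈ D := by
  by_contra hζD
  have hfζ : f.eval ζ ≠ 0 := fun h => hζD (hroots ζ h)
  set S := (f.roots.map fun r => 1 / (ζ - r)).sum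
  have hS : (f.natDegree : ℂ) + (w - ζ) * S = 0 := by
    rw [IsRoot, eval_polarDeriv, (IsAlgClosed.splits f).eval_derivative_eq_eval_mul_sum hfζ] at hζ
    refine (mul_eq_zero.1 ?_).resolve_left hfζ
    linear_combination hζ
  have hwζ : w ≠ ζ := by
    rintro rfl
    rw [sub_self, zero_mul, add_zero, Nat.cast_eq_zero] at hS
    omega
  have hcard : f.roots.card = f.natDegree := IsAlgClosed.card_roots_eq_natDegree
  refine hD.sum_one_div_sub_ne (R := f.roots) ?_ (fun r hr => hroots r (isRoot_of_mem_roots hr))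
    hw hζD hwζ ?_
  · rw [← Multiset.card_pos, hcard]
    exact hf
  · rw [hcard]
    field_simp [sub_ne_zero.2 hwζ.symm]
    linear_combination -hS

theorem inv_choose_succ_eq {K : Type*} [Field K] [CharZero K] {n k : ℕ} (hk : k ≤ n) :
    (((n + 1).choose k : ℕ) : K)⁻¹ = ((n : K) + 1)⁻¹ * (n.choose k : K)⁻¹ * ((n : K) + 1 - k) := by
  have h : (n.choose k * (n + 1) : K) = (n + 1).choose k * ((n : K) + 1 - k) := by
    rw [← Nat.cast_succ, ← Nat.cast_sub (by omega : k ≤ n + 1)]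
    exact_mod_cast Nat.choose_mul_succ_eq n k
  have : ((n + 1).choose k : K) ≠ 0 := by exact_mod_cast (Nat.choose_pos (by omega)).ne'
  have : (n.choose k : K) ≠ 0 := by exact_mod_cast (Nat.choose_pos hk).ne'
  field_simp
  linear_combination h

theorem inv_choose_succ_succ_eq {K : Type*} [Field K] [CharZero K] {n k : ℕ} (hk : k ≤ n) :
    (((n + 1).choose (k + 1) : ℕ) : K)⁻¹ = ((n : K) + 1)⁻¹ * (n.choose k : K)⁻¹ * ((k : K) + 1) := by
  have h : ((n + 1) * n.choose k : K) = (n + 1).choose (k + 1) * ((k : K) + 1) := by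
    exact_mod_cast Nat.add_one_mul_choose_eq n k
  have : ((n + 1).choose (k + 1) : K) ≠ 0 := by exact_mod_cast (Nat.choose_pos (by omega)).ne'
  have : (n.choose k : K) ≠ 0 := by exact_mod_cast (Nat.choose_pos hk).ne'
  field_simp
  linear_combination h

theorem apol_C_mul (m : ℕ) (f g : ℂ[X]) (b : ℂ) : apol m f (C b * g) = b * apol m f g := by
  simp only [apol, coeff_C_mul, Finset.mul_sum]
  exact Finset.sum_congr rfl fun _ _ => by ring

theorem apol_X_sub_C_pow {n : ℕ} {f : ℂ[X]} (hf : f.natDegree ≤ n) (c : ℂ) :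
    apol n f ((X - C c) ^ n) = f.eval c := by
  rw [apol, eval_eq_sum_range' (Nat.lt_succ_of_le hf)]
  refine Finset.sum_congr rfl fun k hk => ?_
  have hk : k ≤ n := Nat.lt_succ_iff.1 (Finset.mem_range.1 hk)
  have : (n.choose k : ℂ) ≠ 0 := by exact_mod_cast (Nat.choose_pos hk).ne'
  rw [sub_eq_add_neg, ← map_neg, coeff_X_add_C_pow, Nat.sub_sub_self hk, Nat.choose_symm hk,
    neg_pow c]
  have hsq : (-1 : ℂ) ^ k * (-1) ^ k = 1 := by rw [← mul_pow]; norm_num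
  field_simp
  linear_combination f.coeff k * c ^ k * hsq

open Finset in
theorem apol_X_sub_C_mul {n : ℕ} (f : ℂ[X]) (w : ℂ) {h : ℂ[X]} (hh : h.natDegree ≤ n) :
    apol (n + 1) f ((X - C w) * h) = ((n : ℂ) + 1)⁻¹ * apol n (polarDeriv (n + 1) w f) h := by
  have hX : ∑ k ∈ range (n + 2), (-1 : ℂ) ^ k * ((n + 1).choose k : ℂ)⁻¹ * f.coeff k
        * (X * h).coeff (n + 1 - k)
      = ∑ k ∈ range (n + 1), (-1 : ℂ) ^ k * ((n + 1).choose k : ℂ)⁻¹ * f.coeff k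
        * h.coeff (n - k) := by
    rw [sum_range_succ, Nat.sub_self, coeff_X_mul_zero, mul_zero, add_zero]
    refine sum_congr rfl fun k hk => ?_
    rw [show n + 1 - k = n - k + 1 by have := mem_range.1 hk; omega, coeff_X_mul]
  have hC : ∑ k ∈ range (n + 2), (-1 : ℂ) ^ k * ((n + 1).choose k : ℂ)⁻¹ * f.coeff k
        * (w * h.coeff (n + 1 - k))
      = ∑ k ∈ range (n + 1), (-1 : ℂ) ^ (k + 1) * ((n + 1).choose (k + 1) : ℂ)⁻¹
        * f.coeff (k + 1) * (w * h.coeff (n - k)) := by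
    rw [sum_range_succ', Nat.sub_zero, coeff_eq_zero_of_natDegree_lt (p := h) (by omega),
      mul_zero, mul_zero, add_zero]
    simp only [Nat.add_sub_add_right]
  simp only [apol, sub_mul, coeff_sub, coeff_C_mul, mul_sub, sum_sub_distrib]
  rw [hX, hC, mul_sum, ← sum_sub_distrib]
  refine sum_congr rfl fun k hk => ?_
  have hk : k ≤ n := Nat.lt_succ_iff.1 (mem_range.1 hk)
  rw [coeff_polarDeriv, inv_choose_succ_eq hk, inv_choose_succ_succ_eq hk]
  push_cast
  ring

theorem IsCircularDomain.apol_prod_X_sub_C_ne_zero {D : Set ℂ} (hD : IsCircularDomain D)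
    {f : ℂ[X]} (hf : f ≠ 0) (hroots : ∀ z, f.IsRoot z → z ∈ D) {W : Multiset ℂ}
    (hW : W.card = f.natDegree) (hWD : ∀ w ∈ W, w ∉ D) :
    apol f.natDegree f (W.map fun w => X - C w).prod ≠ 0 := by
  induction hn : f.natDegree generalizing f W with
  | zero =>
    rw [hn, Multiset.card_eq_zero] at hW
    subst hW
    simpa [apol, leadingCoeff, hn] using leadingCoeff_ne_zero.2 hf
  | succ n ih =>
    rw [hn] at hW
    by_cases hdeg : ∃ w ∈ W, (polarDeriv (n + 1) w f).coeff n ≠ 0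
    · obtain ⟨w, hwW, hw⟩ := hdeg
      obtain ⟨W', rfl⟩ := Multiset.exists_cons_of_mem hwW
      set g := polarDeriv (n + 1) w f
      have hg : g.natDegree = n :=
        le_antisymm (natDegree_polarDeriv_le w hn.le) (le_natDegree_of_ne_zero hw)
      have hgroots : ∀ z, g.IsRoot z → z ∈ D := fun z hz =>
        hD.isRoot_polarDeriv_mem (by omega) hroots (hWD w hwW) (by rwa [hn])
      have hW' : W'.card = n := by simpa using hW
      rw [Multiset.map_cons, Multiset.prod_cons, apol_X_sub_C_mul f w
        (natDegree_multiset_prod_X_sub_C_eq_card W' ▸ hW'.le)]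
      exact mul_ne_zero (inv_ne_zero (Nat.cast_add_one_ne_zero n))
        (ih (fun h0 => hw (by rw [h0, coeff_zero])) hgroots (hg ▸ hW')
          (fun v hv => hWD v (Multiset.mem_cons_of_mem hv)) hg)
    · push Not at hdeg
      obtain ⟨c, hc⟩ := Multiset.card_pos_iff_exists_mem.1 (by omega : 0 < W.card)
      have hlead : f.coeff (n + 1) ≠ 0 := hn ▸ leadingCoeff_ne_zero.2 hf
      have hWc : W = Multiset.replicate (n + 1) c := Multiset.eq_replicate.2
        ⟨hW, fun v hv => eq_of_coeff_polarDeriv_eq_zero hlead (hdeg v hv) (hdeg c hc)⟩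
      rw [hWc, Multiset.map_replicate, Multiset.prod_replicate, apol_X_sub_C_pow hn.le]
      exact fun h => hWD c hc (hroots c h)

theorem IsCircularDomain.exists_isRoot_mem_of_apol_eq_zero {D : Set ℂ} (hD : IsCircularDomain D)
    {f g : ℂ[X]} (hf : f ≠ 0) (hroots : ∀ z, f.IsRoot z → z ∈ D) (hg : g ≠ 0)
    (hfg : g.natDegree = f.natDegree) (hap : apol f.natDegree f g = 0) :
    ∃ z ∈ D, g.IsRoot z := by
  by_contra! h
  refine hD.apol_prod_X_sub_C_ne_zero hf hroots (W := g.roots)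
    (by rw [IsAlgClosed.card_roots_eq_natDegree, hfg])
    (fun w hw hwD => h w hwD (isRoot_of_mem_roots hw)) ?_
  rw [← C_leadingCoeff_mul_prod_multiset_X_sub_C (p := g) IsAlgClosed.card_roots_eq_natDegree,
    apol_C_mul] at hap
  exact (mul_eq_zero.1 hap).resolve_left (leadingCoeff_ne_zero.2 hg)

theorem stmt_9_general (D : Set ℂ) (hD : IsCircularDomain D)
    (d : ℕ) (hd : 1 ≤ d) (q : Polynomial ℂ) (hqd : q.natDegree = d)
    (n : ℕ) (hn : 1 ≤ n)
    (f g : Polynomial ℂ) (hf : f.natDegree = n) (hg : g.natDegree = n)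
    (hap : apol (n * d) (f.comp q) (g.comp q) = 0)
    (hroots : ∀ z : ℂ, f.IsRoot z → z ∈ innerImage q D) :
    ∃ u ∈ (fun z => q.eval z) '' D, g.IsRoot u := by
  have hF : (f.comp q).natDegree = n * d := by rw [natDegree_comp, hf, hqd]
  have hG : (g.comp q).natDegree = n * d := by rw [natDegree_comp, hg, hqd]
  have hnd : 0 < n * d := Nat.mul_pos hn hd
  obtain ⟨z, hzD, hz⟩ := hD.exists_isRoot_mem_of_apol_eq_zero
    (ne_zero_of_natDegree_gt (hF ▸ hnd))
    (fun z hz => hroots _ (by rwa [IsRoot, eval_comp] at hz) z rfl)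
    (ne_zero_of_natDegree_gt (hG ▸ hnd)) (hG.trans hF.symm) (hF ▸ hap)
  exact ⟨q.eval z, ⟨z, hzD, rfl⟩, by rwa [IsRoot, eval_comp] at hz⟩

/-- Generalized Grace theorem. -/
theorem stmt_9 (D : Set ℂ) (hD : IsCircularDomain D)
    (d : ℕ) (hd : 1 ≤ d) (q : Polynomial ℂ) (hq : q.Monic) (hqd : q.natDegree = d)
    (n : ℕ) (hn : 1 ≤ n)
    (f g : Polynomial ℂ) (hf : f.natDegree = n) (hg : g.natDegree = n)
    (hap : apol (n * d) (f.comp q) (g.comp q) = 0)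
    (hroots : ∀ z : ℂ, f.IsRoot z → z ∈ innerImage q D) :
    ∃ u ∈ (fun z => q.eval z) '' D, g.IsRoot u :=
  stmt_9_general D hD d hd q hqd n hn f g hf hg hap hroots
end

section
/- Let H be a complex inner product space of finite dimension n ≥ 1, let ε ∈ {−1, 1}, and let C : H → H be an antilinear conjugation, i.e. C is additive, C(αx) = conj(α)·C(x), ⟨Cx, Cy⟩ = ⟨y, x⟩ for all x, y ∈ H and α ∈ ℂ, and C² = ε·id. Let T : H → H be an invertible linear map whose adjoint satisfies T* = C∘T∘C. Then there exist an antilinear map J : H → H with J² = id and ⟨Jx, Jy⟩ = ⟨y, x⟩ for all x, y, and a self-adjoint positive semidefinite linear map P : H → H, such that P∘P = T*∘T, J∘P = P∘J, and T = C∘J∘P. -/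
/-!
Put `D = C⁻¹ = ε C`; the hypothesis on `T` says `D T D = T*`, and `D` is antiunitary. Let
`P = √(T*T)`. Conjugation by `D` is a ring automorphism of the operators preserving positivity,
so it maps `P` to the positive square root of `D⁻¹ T*T D = T T*`; and `√(TT*) T = T P`, because
`T P⁻¹ T*` is a positive square root of `TT*`. Hence `J = D U`, with `U = T P⁻¹` the unitary polar
factor of `T`, is antiunitary, commutes with `P` and satisfies `J P = D T`, i.e. `T = C J P`.
Finally `J² P² = (J P)² = D T D T = T*T = P²`, so `J² = 1`.
-/

open scoped InnerProductSpace ComplexConjugate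

namespace CFC

open Ring

variable {A : Type*} [CStarAlgebra A] [PartialOrder A] [StarOrderedRing A] {t : A}

lemma isUnit_sqrt_star_mul_self (ht : IsUnit t) : IsUnit (sqrt (star t * t)) :=
  (isUnit_sqrt_iff _).mpr (ht.star.mul ht)

lemma mul_inverse_sqrt_star_mul_self_mem_unitary (ht : IsUnit t) :
    t * (sqrt (star t * t))⁻¹ʳ ∈ unitary A := by
  set p := sqrt (star t * t)
  have hp : IsUnit p := isUnit_sqrt_star_mul_self ht
  have hq : IsSelfAdjoint p⁻¹ʳ :=
    ((ringInverse_nonneg_iff_nonneg_of_isUnit hp).mpr (sqrt_nonneg _)).isSelfAdjoint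
  refine (ht.mul hp.ringInverse).mem_unitary_of_star_mul_self ?_
  calc star (t * p⁻¹ʳ) * (t * p⁻¹ʳ) = p⁻¹ʳ * (p * p) * p⁻¹ʳ := by
        rw [star_mul, hq.star_eq, sqrt_mul_sqrt_self _]; noncomm_ring
    _ = 1 := by simp [inverse_mul_cancel _ hp, mul_assoc, mul_inverse_cancel _ hp]

lemma sqrt_mul_star_self_mul (ht : IsUnit t) :
    sqrt (t * star t) * t = t * sqrt (star t * t) := by
  set p := sqrt (star t * t)
  have hp : IsUnit p := isUnit_sqrt_star_mul_self ht
  have hq : 0 ≤ p⁻¹ʳ := (ringInverse_nonneg_iff_nonneg_of_isUnit hp).mpr (sqrt_nonneg _)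
  have hpp : p * p = star t * t := sqrt_mul_sqrt_self _
  have hb : sqrt (t * star t) = t * p⁻¹ʳ * star t := by
    refine sqrt_unique ?_ (by simpa using star_left_conjugate_nonneg hq (star t))
    calc t * p⁻¹ʳ * star t * (t * p⁻¹ʳ * star t)
        = t * p⁻¹ʳ * (p * p) * p⁻¹ʳ * star t := by rw [hpp]; noncomm_ring
      _ = t * star t := by
        simp [mul_assoc, inverse_mul_cancel_left _ _ hp, mul_inverse_cancel _ hp]
  calc sqrt (t * star t) * t = t * p⁻¹ʳ * (p * p) := by rw [hb, hpp]; noncomm_ring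
    _ = t * p := by rw [← mul_assoc, mul_assoc t, inverse_mul_cancel _ hp, mul_one]

end CFC

lemma Complex.conj_eq_self_and_mul_self_eq_one {ε : ℂ} (hε : ε = 1 ∨ ε = -1) :
    conj ε = ε ∧ ε * ε = 1 := by
  rcases hε with rfl | rfl <;> norm_num

lemma LinearMap.exists_linearEquiv_symm_eq_of_apply_apply_eq_smul {E : Type*} [AddCommGroup E]
    [Module ℂ E] (C : E →ₗ⋆[ℂ] E) {ε : ℂ} (hε : ε = 1 ∨ ε = -1) (hC : ∀ x, C (C x) = ε • x) :
    ∃ D : E ≃ₗ⋆[ℂ] E, (∀ x, D x = ε • C x) ∧ ∀ x, D.symm x = C x := by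
  obtain ⟨hεr, hεε⟩ := Complex.conj_eq_self_and_mul_self_eq_one hε
  refine ⟨.ofLinearMap (ε • C) C ?_ ?_, fun _ => rfl, fun _ => rfl⟩ <;> ext x
  · simp [hC, smul_smul, hεε]
  · simp [hC, smul_smul, hεr, hεε]

section Antiunitary

variable {H : Type*} [NormedAddCommGroup H] [InnerProductSpace ℂ H] [FiniteDimensional ℂ H]

noncomputable def antilinearConj (D : H ≃ₗ⋆[ℂ] H) (A : H →L[ℂ] H) : H →L[ℂ] H :=
  LinearMap.toContinuousLinearMap (D.symm.toLinearMap ∘ₛₗ A.toLinearMap ∘ₛₗ D.toLinearMap)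

variable {D : H ≃ₗ⋆[ℂ] H}

@[simp]
lemma antilinearConj_apply (A : H →L[ℂ] H) (x : H) :
    antilinearConj D A x = D.symm (A (D x)) := rfl

lemma antilinearConj_mul (A B : H →L[ℂ] H) :
    antilinearConj D (A * B) = antilinearConj D A * antilinearConj D B := by
  ext x; simp

lemma antilinearConj_nonneg (hD : ∀ x y, ⟪D x, D y⟫_ℂ = ⟪y, x⟫_ℂ) {A : H →L[ℂ] H}
    (hA : 0 ≤ A) : 0 ≤ antilinearConj D A := by
  rw [ContinuousLinearMap.nonneg_iff_isPositive] at hA ⊢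
  have hinner (x y : H) : ⟪antilinearConj D A x, y⟫_ℂ = ⟪D y, A (D x)⟫_ℂ := by
    simpa using (hD y (antilinearConj D A x)).symm
  refine (ContinuousLinearMap.isPositive_iff _).mpr ⟨fun x y => ?_, fun x => ?_⟩
  · change ⟪antilinearConj D A x, y⟫_ℂ = ⟪x, antilinearConj D A y⟫_ℂ
    rw [hinner, ← inner_conj_symm x, hinner, ← hA.inner_left_eq_inner_right, inner_conj_symm]
  · rw [hinner]
    exact hA.inner_nonneg_right _

open CFC Ring

lemma antilinearConj_sqrt (hD : ∀ x y, ⟪D x, D y⟫_ℂ = ⟪y, x⟫_ℂ) {A : H →L[ℂ] H} (hA : 0 ≤ A) :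
    antilinearConj D (sqrt A) = sqrt (antilinearConj D A) := by
  refine (sqrt_unique ?_ (antilinearConj_nonneg hD (sqrt_nonneg A))).symm
  rw [← antilinearConj_mul, sqrt_mul_sqrt_self A]

lemma antilinearConj_sqrt_star_mul_self_mul (hD : ∀ x y, ⟪D x, D y⟫_ℂ = ⟪y, x⟫_ℂ)
    {T : H →L[ℂ] H} (hT : IsUnit T) (hDT : ∀ x, D (T (D x)) = star T x) :
    antilinearConj D (sqrt (star T * T)) * T = T * sqrt (star T * T) := by
  have hconj : antilinearConj D (star T * T) = T * star T := by
    ext x; simp [← hDT]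
  rw [antilinearConj_sqrt hD (star_mul_self_nonneg T), hconj, sqrt_mul_star_self_mul hT]

theorem exists_antiunitary_involution_commute_sqrt (hD : ∀ x y, ⟪D x, D y⟫_ℂ = ⟪y, x⟫_ℂ)
    {T : H →L[ℂ] H} (hT : IsUnit T) (hDT : ∀ x, D (T (D x)) = star T x) :
    ∃ J : H →ₗ⋆[ℂ] H, (∀ x y, ⟪J x, J y⟫_ℂ = ⟪y, x⟫_ℂ) ∧ (∀ x, J (J x) = x) ∧
      ∀ x, J (sqrt (star T * T) x) = sqrt (star T * T) (J x) ∧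
        J (sqrt (star T * T) x) = D (T x) := by
  set P := sqrt (star T * T)
  have hP : IsUnit P := isUnit_sqrt_star_mul_self hT
  set U := T * P⁻¹ʳ
  have hU : U ∈ unitary (H →L[ℂ] H) := mul_inverse_sqrt_star_mul_self_mem_unitary hT
  let J : H →ₗ⋆[ℂ] H := D.toLinearMap ∘ₛₗ U.toLinearMap
  have hJP (x : H) : J (P x) = D (T x) := by
    simp [J, U, ← mul_apply_eq_comp, inverse_mul_cancel _ hP]
  have hPJ (x : H) : P (J x) = J (P x) := by
    have hPinv : P (P⁻¹ʳ x) = x := by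
      rw [← mul_apply_eq_comp, mul_inverse_cancel _ hP, one_apply_eq_self]
    have h : D.symm (P (D (T (P⁻¹ʳ x)))) = T (P (P⁻¹ʳ x)) :=
      congr($(antilinearConj_sqrt_star_mul_self_mul hD hT hDT) (P⁻¹ʳ x))
    rw [hPinv] at h
    rw [hJP, ← h, LinearEquiv.apply_symm_apply]
    rfl
  refine ⟨J, fun x y => ?_, fun x => ?_, fun x => ⟨(hPJ x).symm, hJP x⟩⟩
  · simp [J, hD, ContinuousLinearMap.inner_map_map_of_mem_unitary hU]
  · obtain ⟨y, rfl⟩ := (ContinuousLinearMap.isUnit_iff_bijective.mp (hP.mul hP)).2 x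
    rw [mul_apply_eq_comp, ← hPJ, hJP, hJP, hDT, ← mul_apply_eq_comp P,
      sqrt_mul_sqrt_self _ (star_mul_self_nonneg T)]
    rfl

end Antiunitary

open CFC in
theorem stmt_15_general {H : Type*} [NormedAddCommGroup H] [InnerProductSpace ℂ H]
    [FiniteDimensional ℂ H]
    (ε : ℂ) (hε : ε = 1 ∨ ε = -1)
    (C : H → H)
    (hCadd : ∀ x y : H, C (x + y) = C x + C y)
    (hCsmul : ∀ (a : ℂ) (x : H), C (a • x) = (conj a) • C x)
    (hCiso : ∀ x y : H, ⟪C x, C y⟫_ℂ = ⟪y, x⟫_ℂ)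
    (hCsq : ∀ x : H, C (C x) = ε • x)
    (T : H →ₗ[ℂ] H) (hTinv : Function.Bijective T)
    (hTadj : ∀ x : H, LinearMap.adjoint T x = C (T (C x))) :
    ∃ (J : H → H) (P : H →ₗ[ℂ] H),
      (∀ x y : H, J (x + y) = J x + J y) ∧
      (∀ (a : ℂ) (x : H), J (a • x) = (conj a) • J x) ∧
      (∀ x y : H, ⟪J x, J y⟫_ℂ = ⟪y, x⟫_ℂ) ∧
      (∀ x : H, J (J x) = x) ∧
      LinearMap.adjoint P = P ∧
      (∀ x : H, ∃ r : ℝ, 0 ≤ r ∧ ⟪P x, x⟫_ℂ = (r : ℂ)) ∧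
      P ∘ₗ P = LinearMap.adjoint T ∘ₗ T ∧
      (∀ x : H, J (P x) = P (J x)) ∧
      (∀ x : H, T x = C (J (P x))) := by
  obtain ⟨hεr, hεε⟩ := Complex.conj_eq_self_and_mul_self_eq_one hε
  obtain ⟨D, hD, hDsymm⟩ :=
    LinearMap.exists_linearEquiv_symm_eq_of_apply_apply_eq_smul ⟨⟨C, hCadd⟩, hCsmul⟩ hε hCsq
  simp only [LinearMap.coe_mk, AddHom.coe_mk] at hD hDsymm
  have hDiso (x y : H) : ⟪D x, D y⟫_ℂ = ⟪y, x⟫_ℂ := by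
    rw [← hCiso, ← hDsymm, ← hDsymm, D.symm_apply_apply, D.symm_apply_apply]
  set T' := T.toContinuousLinearMap
  have hT' : IsUnit T' := ContinuousLinearMap.isUnit_iff_bijective.mpr hTinv
  have hDT (x : H) : D (T' (D x)) = star T' x := by
    simp [T', hD, hCsmul, hεr, smul_smul, hεε, ContinuousLinearMap.star_eq_adjoint,
      ← LinearMap.adjoint_toContinuousLinearMap, hTadj]
  obtain ⟨J, hJiso, hJJ, hJP⟩ := exists_antiunitary_involution_commute_sqrt hDiso hT' hDT
  set P := sqrt (star T' * T')
  have hP : P.IsPositive := (ContinuousLinearMap.nonneg_iff_isPositive _).mp (sqrt_nonneg _)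
  refine ⟨J, P, J.map_add, J.map_smulₛₗ, hJiso, hJJ, hP.toLinearMap.adjoint_eq,
    fun x => ?_, ?_, fun x => (hJP x).1, fun x => ?_⟩
  · obtain ⟨r, hr, hrx⟩ := RCLike.nonneg_iff_exists_ofReal.mp (hP.inner_nonneg_left x)
    exact ⟨r, hr, hrx.symm⟩
  · ext x
    exact congr($(sqrt_mul_sqrt_self (star T' * T') (star_mul_self_nonneg T')) x)
  · change T x = C (J (P x))
    rw [(hJP x).2, ← hDsymm, D.symm_apply_apply]
    rfl

/-- polar-type decomposition T = C∘J∘P of a C-symmetric invertible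
linear map (Thm. on skew eigenfunctions, part 1). -/
theorem stmt_15 {H : Type*} [NormedAddCommGroup H] [InnerProductSpace ℂ H]
    [FiniteDimensional ℂ H] (n : ℕ) (hn : 1 ≤ n) (hdim : Module.finrank ℂ H = n)
    (ε : ℂ) (hε : ε = 1 ∨ ε = -1)
    (C : H → H)
    (hCadd : ∀ x y : H, C (x + y) = C x + C y)
    (hCsmul : ∀ (a : ℂ) (x : H), C (a • x) = (conj a) • C x)
    (hCiso : ∀ x y : H, ⟪C x, C y⟫_ℂ = ⟪y, x⟫_ℂ)
    (hCsq : ∀ x : H, C (C x) = ε • x)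
    (T : H →ₗ[ℂ] H) (hTinv : Function.Bijective T)
    (hTadj : ∀ x : H, LinearMap.adjoint T x = C (T (C x))) :
    ∃ (J : H → H) (P : H →ₗ[ℂ] H),
      (∀ x y : H, J (x + y) = J x + J y) ∧
      (∀ (a : ℂ) (x : H), J (a • x) = (conj a) • J x) ∧
      (∀ x y : H, ⟪J x, J y⟫_ℂ = ⟪y, x⟫_ℂ) ∧
      (∀ x : H, J (J x) = x) ∧
      LinearMap.adjoint P = P ∧
      (∀ x : H, ∃ r : ℝ, 0 ≤ r ∧ ⟪P x, x⟫_ℂ = (r : ℂ)) ∧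
      P ∘ₗ P = LinearMap.adjoint T ∘ₗ T ∧
      (∀ x : H, J (P x) = P (J x)) ∧
      (∀ x : H, T x = C (J (P x))) :=
  stmt_15_general ε hε C hCadd hCsmul hCiso hCsq T hTinv hTadj
end
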